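/- arXiv:0901.2331 — 7 statements merged into one kernel-verified Lean document; each statement's English description precedes it below -/
import Mathlib

section
/- Let A be a unital C*-algebra and let u be a 3×3 magic unitary over A. Then the nine entries u_ij pairwise commute with each other. -/
private lemma sum3_eq {A : Type*} [AddCommMonoid A] (f : Fin 3 → A) (i k m : Fin 3)
    (hik : i ≠ k) (him : i ≠ m) (hkm : k ≠ m) :
    f i + f k + f m = ∑ r, f r := by
  fin_cases i <;> fin_cases k <;> fin_cases m <;>
    simp_all [Fin.sum_univ_three] <;> abel

private lemma one_sub_idem {A : Type*} [Ring A] (r : A) (h : r * r = r) :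
    (1 - r) * (1 - r) = 1 - r := by
  rw [sub_mul, one_mul, mul_sub, mul_one, h]; abel

private lemma third_exists : ∀ i k : Fin 3, i ≠ k → ∃ m, m ≠ i ∧ m ≠ k := by decide

/-- Two idempotents in a ℂ-algebra whose sum is idempotent are orthogonal. -/
private lemma orth_of_idem {A : Type*} [Ring A] [Algebra ℂ A]
    (p q : A) (hp : p * p = p) (hq : q * q = q)
    (hpq : (p + q) * (p + q) = p + q) : p * q = 0 := by
  have h1 : p * q + q * p = 0 := by
    rw [add_mul, mul_add, mul_add, hp, hq] at hpq
    have h2 : p * q + q * p + (p + q) = p + q := by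
      calc p * q + q * p + (p + q) = p + p * q + (q * p + q) := by abel
        _ = p + q := hpq
    exact add_eq_right.mp h2
  have hqp : q * p = -(p * q) := eq_neg_of_add_eq_zero_right h1
  have hpq' : p * q = -(q * p) := eq_neg_of_add_eq_zero_left h1
  have ha : p * q * p = p * q := by
    rw [hpq', neg_mul, mul_assoc, hp]
  have hb : p * q * p = -(p * q) := by
    rw [mul_assoc, hqp, mul_neg, ← mul_assoc, hp]
  have hc : p * q = -(p * q) := ha.symm.trans hb
  have h2 : (2 : ℂ) • (p * q) = 0 := by
    rw [two_smul]
    exact add_eq_zero_iff_eq_neg.mpr hc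
  have := smul_eq_zero.mp h2
  rcases this with h | h
  · exact absurd h (by norm_num)
  · exact h

/-- The nine entries of a 3×3 magic unitary over a unital C*-algebra
pairwise commute. -/
theorem stmt_1 (A : Type*) [CStarAlgebra A]
    (u : Matrix (Fin 3) (Fin 3) A)
    (hproj : ∀ i j, u i j * u i j = u i j ∧ star (u i j) = u i j)
    (hrow : ∀ i, ∑ j, u i j = 1)
    (hcol : ∀ j, ∑ i, u i j = 1) :
    ∀ i j k l, Commute (u i j) (u k l) := by
  have idem : ∀ i j, u i j * u i j = u i j := fun i j => (hproj i j).1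
  -- orthogonality within a row
  have roworth : ∀ i j l, j ≠ l → u i j * u i l = 0 := by
    intro i j l hjl
    obtain ⟨n, hn1, hn2⟩ := third_exists j l hjl
    have hsum : u i j + u i l + u i n = 1 := by
      rw [sum3_eq (fun r => u i r) j l n hjl (Ne.symm hn1) (Ne.symm hn2)]
      exact hrow i
    have hs : u i j + u i l = 1 - u i n := by
      rw [← hsum]; abel
    have hidem : (u i j + u i l) * (u i j + u i l) = u i j + u i l := by
      rw [hs]; exact one_sub_idem _ (idem i n)
    exact orth_of_idem _ _ (idem i j) (idem i l) hidem
  -- orthogonality within a column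
  have colorth : ∀ i k j, i ≠ k → u i j * u k j = 0 := by
    intro i k j hik
    obtain ⟨m, hm1, hm2⟩ := third_exists i k hik
    have hsum : u i j + u k j + u m j = 1 := by
      rw [sum3_eq (fun r => u r j) i k m hik (Ne.symm hm1) (Ne.symm hm2)]
      exact hcol j
    have hs : u i j + u k j = 1 - u m j := by
      rw [← hsum]; abel
    have hidem : (u i j + u k j) * (u i j + u k j) = u i j + u k j := by
      rw [hs]; exact one_sub_idem _ (idem m j)
    exact orth_of_idem _ _ (idem i j) (idem k j) hidem
  -- shift lemma (left): u i j * u k l = u i j * u m n for fully distinct indices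
  have shiftL : ∀ i k m j l n, i ≠ k → i ≠ m → k ≠ m → j ≠ l → j ≠ n → l ≠ n →
      u i j * u k l = u i j * u m n := by
    intro i k m j l n hik him hkm hjl hjn hln
    have e1 : u k l = 1 - u i l - u m l := by
      have := sum3_eq (fun r => u r l) i k m hik him hkm
      rw [hcol l] at this
      rw [← this]; abel
    have e2 : u m l = 1 - u m j - u m n := by
      have := sum3_eq (fun r => u m r) j l n hjl hjn hln
      rw [hrow m] at this
      rw [← this]; abel
    have o1 : u i j * u i l = 0 := roworth i j l hjl
    have o2 : u i j * u m j = 0 := colorth i m j him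
    calc u i j * u k l = u i j * (1 - u i l - u m l) := by rw [← e1]
      _ = u i j - u i j * u i l - u i j * u m l := by
          rw [mul_sub, mul_sub, mul_one]
      _ = u i j - u i j * (1 - u m j - u m n) := by rw [o1, sub_zero, e2]
      _ = u i j - (u i j - u i j * u m j - u i j * u m n) := by
          rw [mul_sub, mul_sub, mul_one]
      _ = u i j * u m n := by rw [o2, sub_zero, sub_sub_cancel]
  -- shift lemma (right): u k l * u i j = u m n * u i j
  have shiftR : ∀ i k m j l n, i ≠ k → i ≠ m → k ≠ m → j ≠ l → j ≠ n → l ≠ n →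
      u k l * u i j = u m n * u i j := by
    intro i k m j l n hik him hkm hjl hjn hln
    have e1 : u k l = 1 - u i l - u m l := by
      have := sum3_eq (fun r => u r l) i k m hik him hkm
      rw [hcol l] at this
      rw [← this]; abel
    have e2 : u m l = 1 - u m j - u m n := by
      have := sum3_eq (fun r => u m r) j l n hjl hjn hln
      rw [hrow m] at this
      rw [← this]; abel
    have o1 : u i l * u i j = 0 := roworth i l j (Ne.symm hjl)
    have o2 : u m j * u i j = 0 := colorth m i j (Ne.symm him)
    calc u k l * u i j = (1 - u i l - u m l) * u i j := by rw [← e1]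
      _ = u i j - u i l * u i j - u m l * u i j := by
          rw [sub_mul, sub_mul, one_mul]
      _ = u i j - (1 - u m j - u m n) * u i j := by rw [o1, sub_zero, e2]
      _ = u i j - (u i j - u m j * u i j - u m n * u i j) := by
          rw [sub_mul, sub_mul, one_mul]
      _ = u m n * u i j := by rw [o2, sub_zero, sub_sub_cancel]
  intro i j k l
  by_cases hik : i = k
  · subst hik
    by_cases hjl : j = l
    · subst hjl; exact Commute.refl _
    · show u i j * u i l = u i l * u i j
      rw [roworth i j l hjl, roworth i l j (Ne.symm hjl)]
  · by_cases hjl : j = l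
    · subst hjl
      show u i j * u k j = u k j * u i j
      rw [colorth i k j hik, colorth k i j (Ne.symm hik)]
    · obtain ⟨m, hm1, hm2⟩ := third_exists i k hik
      obtain ⟨n, hn1, hn2⟩ := third_exists j l hjl
      show u i j * u k l = u k l * u i j
      have A1 : u k l * u i j = u m n * u i j :=
        shiftR i k m j l n hik (Ne.symm hm1) (Ne.symm hm2) hjl (Ne.symm hn1) (Ne.symm hn2)
      have A2 : u m n * u i j = u m n * u k l :=
        shiftL m i k n j l hm1 hm2 hik hn1 hn2 hjl
      have A3 : u m n * u k l = u i j * u k l :=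
        shiftR k m i l n j (Ne.symm hm2) (Ne.symm hik) hm1 (Ne.symm hn2) (Ne.symm hjl) hn1
      exact ((A1.trans A2).trans A3).symm
end

section
/- Let A be a unital C*-algebra and let u be a 3×3 magic unitary over A. Then there exist pairwise orthogonal projections a, b, c, d, e, f in A (i.e. the product of any two distinct ones is 0) with a + b + c + d + e + f = 1, such that u₁₁ = a+b, u₁₂ = c+d, u₁₃ = e+f, u₂₁ = c+f, u₂₂ = a+e, u₂₃ = b+d, u₃₁ = e+d, u₃₂ = b+f, u₃₃ = a+c. -/
private lemma third3' {M : Type*} [AddCommMonoid M] (j l : Fin 3) (h : j ≠ l) :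
    ∃ n : Fin 3, j ≠ n ∧ l ≠ n ∧ ∀ f : Fin 3 → M, f j + f l + f n = f 0 + f 1 + f 2 := by
  fin_cases j <;> fin_cases l <;>
    first
      | exact absurd rfl h
      | exact ⟨2, by decide, by decide, fun f => by abel_nf (config := {red := .default})⟩
      | exact ⟨1, by decide, by decide, fun f => by abel_nf (config := {red := .default})⟩
      | exact ⟨0, by decide, by decide, fun f => by abel_nf (config := {red := .default})⟩

private lemma orth3' {A : Type*} [CStarAlgebra A] {p q r : A}
    (hp : p * p = p ∧ star p = p) (hq : q * q = q ∧ star q = q)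
    (hr : r * r = r ∧ star r = r)
    (hsum : p + q + r = 1) : q * p = 0 ∧ p * q = 0 := by
  letI := CStarAlgebra.spectralOrder A
  haveI := CStarAlgebra.spectralOrderedRing A
  have e : p * (p + q + r) * p = p := by rw [hsum, mul_one, hp.1]
  rw [mul_add, mul_add, add_mul, add_mul] at e
  rw [show p * p * p = p by rw [hp.1, hp.1]] at e
  rw [add_assoc] at e
  have h1 : p * q * p + p * r * p = 0 := add_eq_left.mp e
  have hqp : star (q * p) * (q * p) = p * q * p := by
    rw [star_mul, hp.2, hq.2, mul_assoc, ← mul_assoc q q p, hq.1, ← mul_assoc]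
  have hrp : star (r * p) * (r * p) = p * r * p := by
    rw [star_mul, hp.2, hr.2, mul_assoc, ← mul_assoc r r p, hr.1, ← mul_assoc]
  have hq0 : 0 ≤ p * q * p := hqp ▸ star_mul_self_nonneg (q * p)
  have hr0 : 0 ≤ p * r * p := hrp ▸ star_mul_self_nonneg (r * p)
  have hz : p * q * p = 0 := ((add_eq_zero_iff_of_nonneg hq0 hr0).mp h1).1
  have hqp0 : q * p = 0 := by
    rw [← CStarRing.star_mul_self_eq_zero_iff (q * p), hqp, hz]
  refine ⟨hqp0, ?_⟩
  have := congrArg star hqp0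
  rwa [star_mul, hp.2, hq.2, star_zero] at this

/-- A 3×3 magic unitary over a unital C*-algebra comes from six pairwise
orthogonal projections `a,b,c,d,e,f` (here `v 0, ..., v 5`) summing to `1`, via
`u₁₁ = a+b`, `u₁₂ = c+d`, `u₁₃ = e+f`, `u₂₁ = c+f`, `u₂₂ = a+e`, `u₂₃ = b+d`,
`u₃₁ = e+d`, `u₃₂ = b+f`, `u₃₃ = a+c`. -/
theorem stmt_2 (A : Type*) [CStarAlgebra A]
    (u : Matrix (Fin 3) (Fin 3) A)
    (hproj : ∀ i j, u i j * u i j = u i j ∧ star (u i j) = u i j)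
    (hrow : ∀ i, ∑ j, u i j = 1)
    (hcol : ∀ j, ∑ i, u i j = 1) :
    ∃ v : Fin 6 → A,
      (∀ i, v i * v i = v i ∧ star (v i) = v i) ∧
      (∀ i j, i ≠ j → v i * v j = 0) ∧
      (∑ i, v i = 1) ∧
      u 0 0 = v 0 + v 1 ∧ u 0 1 = v 2 + v 3 ∧ u 0 2 = v 4 + v 5 ∧
      u 1 0 = v 2 + v 5 ∧ u 1 1 = v 0 + v 4 ∧ u 1 2 = v 1 + v 3 ∧
      u 2 0 = v 4 + v 3 ∧ u 2 1 = v 1 + v 5 ∧ u 2 2 = v 0 + v 2 := by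
  -- row and column orthogonality
  have H : ∀ i j l, j ≠ l → u i j * u i l = 0 := by
    intro i j l hjl
    obtain ⟨n, hjn, hln, hf⟩ := third3' (M := A) j l hjl
    have h3 := hf (fun x => u i x)
    have hs : u i j + u i l + u i n = 1 := by
      rw [h3]
      have := hrow i
      rwa [Fin.sum_univ_three] at this
    exact (orth3' (hproj i j) (hproj i l) (hproj i n) hs).2
  have V : ∀ j i k, i ≠ k → u i j * u k j = 0 := by
    intro j i k hik
    obtain ⟨n, hin, hkn, hf⟩ := third3' (M := A) i k hik
    have h3 := hf (fun x => u x j)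
    have hs : u i j + u k j + u n j = 1 := by
      rw [h3]
      have := hcol j
      rwa [Fin.sum_univ_three] at this
    exact (orth3' (hproj i j) (hproj k j) (hproj n j) hs).2
  -- full commutativity of the entries
  have C : ∀ i j k l, u i j * u k l = u k l * u i j := by
    intro i j k l
    by_cases hik : i = k
    · subst hik
      by_cases hjl : j = l
      · subst hjl; rfl
      · rw [H i j l hjl, H i l j (Ne.symm hjl)]
    · by_cases hjl : j = l
      · subst hjl; rw [V j i k hik, V j k i (Ne.symm hik)]
      · obtain ⟨n, hjn, hln, hf⟩ := third3' (M := A) j l hjl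
        have ri : u i j + u i l + u i n = 1 := by
          have h3 := hf (fun x => u i x)
          rw [h3]
          have := hrow i
          rwa [Fin.sum_univ_three] at this
        have rk : u k j + u k l + u k n = 1 := by
          have h3 := hf (fun x => u k x)
          rw [h3]
          have := hrow k
          rwa [Fin.sum_univ_three] at this
        have f1 : u k l * u i l = 0 := V l k i (Ne.symm hik)
        have f2 : u i j * u i n = 0 := H i j n hjn
        have f3 : u i j * u k j = 0 := V j i k hik
        have f4 : u k n * u i n = 0 := V n k i (Ne.symm hik)
        have hkl : u k l = 1 - u k j - u k n := by rw [← rk]; abel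
        have habd : u i j * u k l * u i n = 0 := by
          rw [hkl]
          have expand : u i j * (1 - u k j - u k n) * u i n
              = u i j * u i n - u i j * u k j * u i n - u i j * (u k n * u i n) := by
            noncomm_ring
          rw [expand, f2, f3, f4, zero_mul, mul_zero, sub_zero, sub_zero]
        have habc : u i j * u k l * u i l = 0 := by rw [mul_assoc, f1, mul_zero]
        have hij' : u i j = 1 - u i l - u i n := by rw [← ri]; abel
        have key : u i j * u k l * u i j = u i j * u k l := by
          nth_rewrite 2 [hij']
          have expand2 : u i j * u k l * (1 - u i l - u i n)
              = u i j * u k l - u i j * u k l * u i l - u i j * u k l * u i n := by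
            noncomm_ring
          rw [expand2, habc, habd, sub_zero, sub_zero]
        have sa : star (u i j * u k l * u i j) = u i j * u k l * u i j := by
          rw [star_mul, star_mul, (hproj i j).2, (hproj k l).2, ← mul_assoc]
        calc u i j * u k l = u i j * u k l * u i j := key.symm
          _ = star (u i j * u k l * u i j) := sa.symm
          _ = star (u i j * u k l) := by rw [key]
          _ = u k l * u i j := by rw [star_mul, (hproj i j).2, (hproj k l).2]
  -- row/column sums in explicit form
  have r0 : u 0 0 + u 0 1 + u 0 2 = 1 := by have := hrow 0; rwa [Fin.sum_univ_three] at this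
  have r1 : u 1 0 + u 1 1 + u 1 2 = 1 := by have := hrow 1; rwa [Fin.sum_univ_three] at this
  have c0 : u 0 0 + u 1 0 + u 2 0 = 1 := by have := hcol 0; rwa [Fin.sum_univ_three] at this
  have c1 : u 0 1 + u 1 1 + u 2 1 = 1 := by have := hcol 1; rwa [Fin.sum_univ_three] at this
  have c2 : u 0 2 + u 1 2 + u 2 2 = 1 := by have := hcol 2; rwa [Fin.sum_univ_three] at this
  -- the nine entry identities
  have i00 : u 0 0 * u 1 1 + u 0 0 * u 1 2 = u 0 0 := by
    rw [← mul_add, show u 1 1 + u 1 2 = 1 - u 1 0 from by rw [← r1]; abel,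
      mul_sub, mul_one, V 0 0 1 (by decide), sub_zero]
  have i01 : u 0 1 * u 1 0 + u 0 1 * u 1 2 = u 0 1 := by
    rw [← mul_add, show u 1 0 + u 1 2 = 1 - u 1 1 from by rw [← r1]; abel,
      mul_sub, mul_one, V 1 0 1 (by decide), sub_zero]
  have i02 : u 0 2 * u 1 1 + u 0 2 * u 1 0 = u 0 2 := by
    rw [← mul_add, show u 1 1 + u 1 0 = 1 - u 1 2 from by rw [← r1]; abel,
      mul_sub, mul_one, V 2 0 1 (by decide), sub_zero]
  have i10 : u 0 1 * u 1 0 + u 0 2 * u 1 0 = u 1 0 := by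
    rw [← add_mul, show u 0 1 + u 0 2 = 1 - u 0 0 from by rw [← r0]; abel,
      sub_mul, one_mul, V 0 0 1 (by decide), sub_zero]
  have i11 : u 0 0 * u 1 1 + u 0 2 * u 1 1 = u 1 1 := by
    rw [← add_mul, show u 0 0 + u 0 2 = 1 - u 0 1 from by rw [← r0]; abel,
      sub_mul, one_mul, V 1 0 1 (by decide), sub_zero]
  have i12 : u 0 0 * u 1 2 + u 0 1 * u 1 2 = u 1 2 := by
    rw [← add_mul, show u 0 0 + u 0 1 = 1 - u 0 2 from by rw [← r0]; abel,
      sub_mul, one_mul, V 2 0 1 (by decide), sub_zero]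
  have p1 : u 2 0 * u 0 1 = u 0 1 * u 1 2 := by
    rw [C 2 0 0 1, show u 2 0 = 1 - u 0 0 - u 1 0 from by rw [← c0]; abel,
      mul_sub, mul_sub, mul_one, H 0 1 0 (by decide), sub_zero]
    nth_rewrite 1 [← i01]
    abel
  have p2 : u 2 0 * u 0 2 = u 0 2 * u 1 1 := by
    rw [C 2 0 0 2, show u 2 0 = 1 - u 0 0 - u 1 0 from by rw [← c0]; abel,
      mul_sub, mul_sub, mul_one, H 0 2 0 (by decide), sub_zero]
    nth_rewrite 1 [← i02]
    abel
  have e20 : u 2 0 * u 0 0 + u 2 0 * u 0 1 + u 2 0 * u 0 2 = u 2 0 := by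
    rw [← mul_add, ← mul_add, r0, mul_one]
  rw [V 0 2 0 (by decide), zero_add, p1, p2] at e20
  have i20 : u 0 2 * u 1 1 + u 0 1 * u 1 2 = u 2 0 := by rw [add_comm]; exact e20
  have q1 : u 2 1 * u 0 0 = u 0 0 * u 1 2 := by
    rw [C 2 1 0 0, show u 2 1 = 1 - u 0 1 - u 1 1 from by rw [← c1]; abel,
      mul_sub, mul_sub, mul_one, H 0 0 1 (by decide), sub_zero]
    nth_rewrite 1 [← i00]
    abel
  have q2 : u 2 1 * u 0 2 = u 0 2 * u 1 0 := by
    rw [C 2 1 0 2, show u 2 1 = 1 - u 0 1 - u 1 1 from by rw [← c1]; abel,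
      mul_sub, mul_sub, mul_one, H 0 2 1 (by decide), sub_zero]
    nth_rewrite 1 [← i02]
    abel
  have i21 : u 0 0 * u 1 2 + u 0 2 * u 1 0 = u 2 1 := by
    have e21 : u 2 1 * u 0 0 + u 2 1 * u 0 1 + u 2 1 * u 0 2 = u 2 1 := by
      rw [← mul_add, ← mul_add, r0, mul_one]
    rwa [V 1 2 0 (by decide), add_zero, q1, q2] at e21
  have s1 : u 2 2 * u 0 0 = u 0 0 * u 1 1 := by
    rw [C 2 2 0 0, show u 2 2 = 1 - u 0 2 - u 1 2 from by rw [← c2]; abel,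
      mul_sub, mul_sub, mul_one, H 0 0 2 (by decide), sub_zero]
    nth_rewrite 1 [← i00]
    abel
  have s2 : u 2 2 * u 0 1 = u 0 1 * u 1 0 := by
    rw [C 2 2 0 1, show u 2 2 = 1 - u 0 2 - u 1 2 from by rw [← c2]; abel,
      mul_sub, mul_sub, mul_one, H 0 1 2 (by decide), sub_zero]
    nth_rewrite 1 [← i01]
    abel
  have i22 : u 0 0 * u 1 1 + u 0 1 * u 1 0 = u 2 2 := by
    have e22 : u 2 2 * u 0 0 + u 2 2 * u 0 1 + u 2 2 * u 0 2 = u 2 2 := by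
      rw [← mul_add, ← mul_add, r0, mul_one]
    rwa [V 2 2 0 (by decide), add_zero, s1, s2] at e22
  -- the six projections
  have proj : ∀ j k, (u 0 j * u 1 k) * (u 0 j * u 1 k) = u 0 j * u 1 k := by
    intro j k
    calc (u 0 j * u 1 k) * (u 0 j * u 1 k) = u 0 j * (u 1 k * u 0 j) * u 1 k := by
          noncomm_ring
      _ = u 0 j * (u 0 j * u 1 k) * u 1 k := by rw [C 1 k 0 j]
      _ = (u 0 j * u 0 j) * (u 1 k * u 1 k) := by noncomm_ring
      _ = u 0 j * u 1 k := by rw [(hproj 0 j).1, (hproj 1 k).1]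
  have sastar : ∀ j k, star (u 0 j * u 1 k) = u 0 j * u 1 k := by
    intro j k
    rw [star_mul, (hproj 0 j).2, (hproj 1 k).2, C 1 k 0 j]
  have orthv : ∀ j k j' k' : Fin 3, (u 0 j * u 0 j' = 0 ∨ u 1 k * u 1 k' = 0) →
      (u 0 j * u 1 k) * (u 0 j' * u 1 k') = 0 := by
    intro j k j' k' h
    have step : (u 0 j * u 1 k) * (u 0 j' * u 1 k') = (u 0 j * u 0 j') * (u 1 k * u 1 k') := by
      calc (u 0 j * u 1 k) * (u 0 j' * u 1 k') = u 0 j * (u 1 k * u 0 j') * u 1 k' := by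
            noncomm_ring
        _ = u 0 j * (u 0 j' * u 1 k) * u 1 k' := by rw [C 1 k 0 j']
        _ = (u 0 j * u 0 j') * (u 1 k * u 1 k') := by noncomm_ring
    rw [step]
    rcases h with h | h <;> rw [h] <;> simp
  refine ⟨![u 0 0 * u 1 1, u 0 0 * u 1 2, u 0 1 * u 1 0, u 0 1 * u 1 2,
      u 0 2 * u 1 1, u 0 2 * u 1 0], ?_, ?_, ?_,
      i00.symm, i01.symm, i02.symm, i10.symm, i11.symm, i12.symm,
      i20.symm, i21.symm, i22.symm⟩
  · intro i
    fin_cases i <;> exact ⟨proj _ _, sastar _ _⟩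
  · intro i j hij
    fin_cases i <;> fin_cases j <;>
      first
        | exact absurd rfl hij
        | exact orthv _ _ _ _ (Or.inl (H 0 _ _ (by decide)))
        | exact orthv _ _ _ _ (Or.inr (H 1 _ _ (by decide)))
  · rw [Fin.sum_univ_six]
    show u 0 0 * u 1 1 + u 0 0 * u 1 2 + u 0 1 * u 1 0 + u 0 1 * u 1 2
        + u 0 2 * u 1 1 + u 0 2 * u 1 0 = 1
    calc u 0 0 * u 1 1 + u 0 0 * u 1 2 + u 0 1 * u 1 0 + u 0 1 * u 1 2
          + u 0 2 * u 1 1 + u 0 2 * u 1 0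
        = (u 0 0 * u 1 1 + u 0 0 * u 1 2) + ((u 0 1 * u 1 0 + u 0 1 * u 1 2)
          + (u 0 2 * u 1 1 + u 0 2 * u 1 0)) := by abel
      _ = u 0 0 + (u 0 1 + u 0 2) := by rw [i00, i01, i02]
      _ = 1 := by rw [← add_assoc, r0]
end

section
/- Let ξ = (ξ_ij) be a magic basis of ℂⁿ and let P_ij denote the orthogonal projection onto the line ℂξ_ij. Define the Gram graph of ξ as the simple graph whose vertices are the n² pairs (i,j) with 1 ≤ i,j ≤ n, with distinct vertices (i,l) and (r,j) adjacent whenever ⟨ξ_{lj}, ξ_{ir}⟩ ≠ 0. Then the complex vector space E = { T ∈ M_n(ℂ) : ∑_k T_ik P_kj = ∑_k P_ik T_kj for all i,j } has dimension equal to the number of connected components of the Gram graph; moreover this dimension is at most n. -/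
local notation "⟪" x ", " y "⟫" => @inner ℂ _ _ x y

lemma magic_span_top {n : ℕ} (v : Fin n → EuclideanSpace ℂ (Fin n))
    (hnz : ∀ k, v k ≠ 0)
    (horth : ∀ k l, k ≠ l → ⟪v k, v l⟫ = 0) :
    Submodule.span ℂ (Set.range v) = ⊤ := by
  set e : Fin n → EuclideanSpace ℂ (Fin n) := fun k => ((‖v k‖ : ℂ))⁻¹ • v k with he
  have hnorm : ∀ k, ((‖v k‖ : ℂ)) ≠ 0 := fun k => by
    simpa using norm_ne_zero_iff.mpr (hnz k)
  have hon : Orthonormal ℂ e := by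
    rw [orthonormal_iff_ite]
    intro k l
    simp only [he, inner_smul_left, inner_smul_right, map_inv₀, Complex.conj_ofReal]
    by_cases h : k = l
    · subst h
      rw [if_pos rfl, inner_self_eq_norm_sq_to_K]
      rw [sq]
      field_simp
      exact div_self (pow_ne_zero 2 (hnorm k))
    · rw [if_neg h, horth k l h]; ring
  have hli := hon.linearIndependent
  have hcard : Fintype.card (Fin n) = Module.finrank ℂ (EuclideanSpace ℂ (Fin n)) := by
    simp
  have htop := hli.span_eq_top_of_card_eq_finrank' hcard
  rw [eq_top_iff, ← htop]
  apply Submodule.span_le.mpr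
  rintro _ ⟨k, rfl⟩
  exact Submodule.smul_mem _ _ (Submodule.subset_span ⟨k, rfl⟩)

lemma magic_eq_zero {n : ℕ} (v : Fin n → EuclideanSpace ℂ (Fin n))
    (hnz : ∀ k, v k ≠ 0)
    (horth : ∀ k l, k ≠ l → ⟪v k, v l⟫ = 0)
    (x : EuclideanSpace ℂ (Fin n)) (h : ∀ k, ⟪v k, x⟫ = 0) : x = 0 := by
  have hx : ∀ u ∈ Submodule.span ℂ (Set.range v), ⟪x, u⟫ = 0 := by
    intro u hu
    induction hu using Submodule.span_induction with
    | mem u hu => obtain ⟨k, rfl⟩ := hu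
                  rw [← inner_conj_symm, h k, map_zero]
    | zero => exact inner_zero_right x
    | add u w _ _ hu hw => rw [inner_add_right, hu, hw, add_zero]
    | smul c u _ hu => rw [inner_smul_right, hu, mul_zero]
  have := hx x (by rw [magic_span_top v hnz horth]; trivial)
  exact inner_self_eq_zero.mp this

/-- For a magic basis `ξ` of `ℂⁿ`, with `P i j` the orthogonal projection
onto the line `ℂ • ξ i j`, the space `E = {T : Mₙ(ℂ) | ∀ i j, ∑ₖ T i k • P k j = ∑ₖ T k j • P i k}`
has dimension equal to the number of connected components of the Gram graph of `ξ`
(vertices the pairs `(i,j)`, with `(i,l)` and `(r,j)` adjacent when `⟨ξ l j, ξ i r⟩ ≠ 0`),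
and this dimension is at most `n`. -/
theorem stmt_4 (n : ℕ) (ξ : Fin n → Fin n → EuclideanSpace ℂ (Fin n))
    (hnz : ∀ i j, ξ i j ≠ 0)
    (hrow : ∀ i j₁ j₂, j₁ ≠ j₂ → (inner ℂ (ξ i j₁) (ξ i j₂) : ℂ) = 0)
    (hcol : ∀ j i₁ i₂, i₁ ≠ i₂ → (inner ℂ (ξ i₁ j) (ξ i₂ j) : ℂ) = 0)
    (P : Fin n → Fin n → (EuclideanSpace ℂ (Fin n) →L[ℂ] EuclideanSpace ℂ (Fin n)))
    (hP : ∀ i j, P i j = (Submodule.span ℂ {ξ i j}).subtypeL.comp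
      (Submodule.orthogonalProjectionOnto (Submodule.span ℂ {ξ i j})))
    (E : Submodule ℂ (Matrix (Fin n) (Fin n) ℂ))
    (hE : ∀ T : Matrix (Fin n) (Fin n) ℂ,
      T ∈ E ↔ ∀ i j, ∑ k, T i k • P k j = ∑ k, T k j • P i k)
    (G : SimpleGraph (Fin n × Fin n))
    (hG : G = SimpleGraph.fromRel
      (fun v w => (inner ℂ (ξ v.1 w.1) (ξ v.2 w.2) : ℂ) ≠ 0)) :
    Module.finrank ℂ E = Nat.card G.ConnectedComponent ∧
      Module.finrank ℂ E ≤ n := by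
  have hnorm : ∀ a b, ((‖ξ a b‖ : ℂ)) ≠ 0 := fun a b => by
    simpa using norm_ne_zero_iff.mpr (hnz a b)
  -- projection formula
  have hPa : ∀ a b (x : EuclideanSpace ℂ (Fin n)),
      P a b x = (⟪ξ a b, x⟫ / ((‖ξ a b‖ : ℂ)) ^ 2) • ξ a b := by
    intro a b x
    rw [hP]
    show (Submodule.span ℂ {ξ a b}).starProjection x = _
    rw [Submodule.starProjection_singleton]
    norm_cast
  have hPself : ∀ a b, P a b (ξ a b) = ξ a b := by
    intro a b
    rw [hPa, inner_self_eq_norm_sq_to_K]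
    norm_cast
    simp only [Complex.coe_algebraMap]
    rw [div_self (by exact_mod_cast pow_ne_zero 2 (norm_ne_zero_iff.mpr (hnz a b))),
      one_smul]
  have hPzero : ∀ a b x, ⟪ξ a b, x⟫ = 0 → P a b x = 0 := by
    intro a b x hx
    rw [hPa, hx, zero_div, zero_smul]
  -- action of both sides of the defining relation on basis vectors
  have h1 : ∀ (T : Matrix (Fin n) (Fin n) ℂ) (i l j : Fin n),
      (∑ k, T i k • P k j) (ξ l j) = T i l • ξ l j := by
    intro T i l j
    rw [ContinuousLinearMap.sum_apply, Finset.sum_eq_single l]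
    · rw [ContinuousLinearMap.smul_apply, hPself]
    · intro k _ hk
      rw [ContinuousLinearMap.smul_apply, hPzero k j _ (hcol j k l hk), smul_zero]
    · simp
  have h2 : ∀ (T : Matrix (Fin n) (Fin n) ℂ) (i m l j : Fin n),
      ⟪ξ i m, (∑ k, T k j • P i k) (ξ l j)⟫ = T m j * ⟪ξ i m, ξ l j⟫ := by
    intro T i m l j
    rw [ContinuousLinearMap.sum_apply, inner_sum, Finset.sum_eq_single m]
    · rw [ContinuousLinearMap.smul_apply, hPa, inner_smul_right, inner_smul_right,
        inner_self_eq_norm_sq_to_K]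
      norm_cast
      simp only [Complex.coe_algebraMap]
      rw [div_mul_cancel₀ _ (show ((‖ξ i m‖ ^ 2 : ℝ) : ℂ) ≠ 0 by
        exact_mod_cast pow_ne_zero 2 (norm_ne_zero_iff.mpr (hnz i m)))]
    · intro k _ hk
      rw [ContinuousLinearMap.smul_apply, hPa, inner_smul_right, inner_smul_right,
        hrow i m k (Ne.symm hk), mul_zero, mul_zero]
    · simp
  have hL : ∀ (T : Matrix (Fin n) (Fin n) ℂ) (i m l j : Fin n),
      ⟪ξ i m, (∑ k, T i k • P k j) (ξ l j)⟫ = T i l * ⟪ξ i m, ξ l j⟫ := by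
    intro T i m l j
    rw [h1, inner_smul_right]
  -- forward: membership implies Gram-invariance
  have hfwd : ∀ T : Matrix (Fin n) (Fin n) ℂ, T ∈ E →
      ∀ i m l j, ⟪ξ i m, ξ l j⟫ ≠ 0 → T i l = T m j := by
    intro T hT i m l j hne
    have heq := (hE T).mp hT i j
    have := congrArg (fun A : EuclideanSpace ℂ (Fin n) →L[ℂ] EuclideanSpace ℂ (Fin n)
      => ⟪ξ i m, A (ξ l j)⟫) heq
    replace this : ⟪ξ i m, (∑ k, T i k • P k j) (ξ l j)⟫ =
        ⟪ξ i m, (∑ k, T k j • P i k) (ξ l j)⟫ := this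
    rw [hL, h2] at this
    exact mul_right_cancel₀ hne this
  -- backward: Gram-invariance implies membership
  have hbwd : ∀ T : Matrix (Fin n) (Fin n) ℂ,
      (∀ i m l j, ⟪ξ i m, ξ l j⟫ ≠ 0 → T i l = T m j) → T ∈ E := by
    intro T hT
    rw [hE]
    intro i j
    have key : ∀ l, (∑ k, T i k • P k j) (ξ l j) = (∑ k, T k j • P i k) (ξ l j) := by
      intro l
      have hz : ∀ m, ⟪ξ i m,
          ((∑ k, T i k • P k j) (ξ l j)) - ((∑ k, T k j • P i k) (ξ l j))⟫ = 0 := by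
        intro m
        rw [inner_sub_right, hL, h2]
        by_cases hc : ⟪ξ i m, ξ l j⟫ = 0
        · rw [hc, mul_zero, mul_zero, sub_zero]
        · rw [hT i m l j hc, sub_self]
      have := magic_eq_zero (ξ i) (hnz i) (fun k l' hk => hrow i k l' hk) _ hz
      exact sub_eq_zero.mp this
    refine ContinuousLinearMap.ext fun x => ?_
    have hx : x ∈ Submodule.span ℂ (Set.range fun l => ξ l j) := by
      rw [magic_span_top (fun l => ξ l j) (fun l => hnz l j)
        (fun k l' hk => hcol j k l' hk)]
      trivial
    induction hx using Submodule.span_induction with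
    | mem x hx => obtain ⟨l, rfl⟩ := hx; exact key l
    | zero => simp
    | add u w _ _ hu hw => rw [map_add, map_add, hu, hw]
    | smul c u _ hu => rw [map_smul, map_smul, hu]
  subst hG
  set G := SimpleGraph.fromRel
      (fun v w : Fin n × Fin n => (inner ℂ (ξ v.1 w.1) (ξ v.2 w.2) : ℂ) ≠ 0) with hGdef
  -- the linear map from functions on components to matrices
  let Ψ : (G.ConnectedComponent → ℂ) →ₗ[ℂ] Matrix (Fin n) (Fin n) ℂ :=
    { toFun := fun f => Matrix.of fun i j => f (G.connectedComponentMk (i, j))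
      map_add' := fun f g => rfl
      map_smul' := fun c f => rfl }
  have hinj : Function.Injective Ψ := by
    intro f g h
    funext c
    induction c using SimpleGraph.ConnectedComponent.ind with
    | _ v =>
      obtain ⟨i, j⟩ := v
      exact congrFun (congrFun h i) j
  have hrange : LinearMap.range Ψ = E := by
    apply le_antisymm
    · rintro _ ⟨f, rfl⟩
      apply hbwd
      intro i m l j hne
      show f (G.connectedComponentMk (i, l)) = f (G.connectedComponentMk (m, j))
      by_cases hv : (i, l) = (m, j)
      · rw [hv]
      · congr 1
        apply SimpleGraph.ConnectedComponent.connectedComponentMk_eq_of_adj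
        rw [SimpleGraph.fromRel_adj]
        exact ⟨hv, Or.inl hne⟩
    · intro T hT
      have hadj : ∀ v w : Fin n × Fin n, G.Adj v w → T v.1 v.2 = T w.1 w.2 := by
        intro v w hvw
        rw [SimpleGraph.fromRel_adj] at hvw
        rcases hvw.2 with h | h
        · exact hfwd T hT v.1 w.1 v.2 w.2 h
        · exact (hfwd T hT w.1 v.1 w.2 v.2 h).symm
      have hwalk : ∀ (v w : Fin n × Fin n) (p : G.Walk v w), T v.1 v.2 = T w.1 w.2 := by
        intro v w p
        induction p with
        | nil => rfl
        | cons h p ih => exact (hadj _ _ h).trans ih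
      refine ⟨SimpleGraph.ConnectedComponent.lift (fun v => T v.1 v.2)
        (fun v w p _ => hwalk v w p), ?_⟩
      funext i j
      rfl
  haveI : Finite G.ConnectedComponent := Quotient.finite G.reachableSetoid
  haveI : Fintype G.ConnectedComponent := Fintype.ofFinite _
  have hdim : Module.finrank ℂ E = Nat.card G.ConnectedComponent := by
    rw [← hrange, LinearMap.finrank_range_of_inj hinj, Module.finrank_pi,
      Nat.card_eq_fintype_card]
  refine ⟨hdim, ?_⟩
  rw [hdim]
  rcases Nat.eq_zero_or_pos n with hn | hn
  · subst hn
    simp [Nat.card_eq_fintype_card]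
  · set j0 : Fin n := ⟨0, hn⟩
    have hsurj : Function.Surjective
        (fun k : Fin n => G.connectedComponentMk (k, j0)) := by
      intro c
      induction c using SimpleGraph.ConnectedComponent.ind with
      | _ v =>
        obtain ⟨i, l⟩ := v
        have hex : ∃ k, ⟪ξ i k, ξ l j0⟫ ≠ 0 := by
          by_contra hall
          push_neg at hall
          exact hnz l j0 (magic_eq_zero (ξ i) (hnz i)
            (fun k l' hk => hrow i k l' hk) _ hall)
        obtain ⟨k, hk⟩ := hex
        refine ⟨k, ?_⟩
        by_cases hv : (i, l) = (k, j0)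
        · rw [hv]
        · exact (SimpleGraph.ConnectedComponent.connectedComponentMk_eq_of_adj
            (by rw [SimpleGraph.fromRel_adj]; exact ⟨hv, Or.inl hk⟩)).symm
    calc Nat.card G.ConnectedComponent ≤ Nat.card (Fin n) :=
          Nat.card_le_card_of_surjective _ hsurj
      _ = n := by simp
end

section
/- Let n ≥ 3 and suppose there exists an n×n matrix with all entries in {−1, 1} whose rows are pairwise orthogonal. Then 4 divides n. -/
/-- Sylvester obstruction: If `n ≥ 3` and there is an `n×n` matrix with
entries in `{-1, 1}` whose rows are pairwise orthogonal, then `4 ∣ n`. -/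
theorem stmt_7 (n : ℕ) (hn : 3 ≤ n) (h : Matrix (Fin n) (Fin n) ℝ)
    (hent : ∀ i j, h i j = 1 ∨ h i j = -1)
    (horth : ∀ i j, i ≠ j → ∑ k, h i k * h j k = 0) :
    4 ∣ n := by
  classical
  set i0 : Fin n := ⟨0, by omega⟩ with hi0
  set i1 : Fin n := ⟨1, by omega⟩ with hi1
  set i2 : Fin n := ⟨2, by omega⟩ with hi2
  have h10 : i1 ≠ i0 := by simp [hi0, hi1, Fin.ext_iff]
  have h20 : i2 ≠ i0 := by simp [hi0, hi2, Fin.ext_iff]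
  have h12 : i1 ≠ i2 := by simp [hi1, hi2, Fin.ext_iff]
  have sq : ∀ k, h i0 k * h i0 k = 1 := fun k => by
    rcases hent i0 k with h' | h' <;> rw [h'] <;> norm_num
  have gval : ∀ (i : Fin n) (k : Fin n), h i k * h i0 k = 1 ∨ h i k * h i0 k = -1 := by
    intro i k
    rcases hent i k with h' | h' <;> rcases hent i0 k with h'' | h'' <;>
      rw [h', h''] <;> norm_num
  have s1 : ∑ k, h i1 k * h i0 k = 0 := horth i1 i0 h10
  have s2 : ∑ k, h i2 k * h i0 k = 0 := horth i2 i0 h20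
  have s12 : ∑ k, (h i1 k * h i0 k) * (h i2 k * h i0 k) = 0 := by
    rw [← horth i1 i2 h12]
    refine Finset.sum_congr rfl fun k _ => ?_
    calc (h i1 k * h i0 k) * (h i2 k * h i0 k)
        = h i1 k * h i2 k * (h i0 k * h i0 k) := by ring
      _ = h i1 k * h i2 k := by rw [sq k, mul_one]
  set P : Fin n → Prop := fun k => h i1 k * h i0 k = 1 ∧ h i2 k * h i0 k = 1 with hP
  have expand : ∀ k, (1 + h i1 k * h i0 k) * (1 + h i2 k * h i0 k)
      = if P k then (4 : ℝ) else 0 := by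
    intro k
    by_cases hk : P k
    · rw [if_pos hk]
      obtain ⟨a, b⟩ := hk
      rw [a, b]; norm_num
    · simp only [hk, if_false]
      simp only [hP, not_and_or] at hk
      rcases hk with hk | hk
      · rcases gval i1 k with hv | hv
        · exact absurd hv hk
        · rw [hv]; ring
      · rcases gval i2 k with hv | hv
        · exact absurd hv hk
        · rw [hv]; ring
  have total : ∑ k, (1 + h i1 k * h i0 k) * (1 + h i2 k * h i0 k) = (n : ℝ) := by
    have : ∀ k, (1 + h i1 k * h i0 k) * (1 + h i2 k * h i0 k)
        = 1 + (h i1 k * h i0 k + (h i2 k * h i0 k + (h i1 k * h i0 k) * (h i2 k * h i0 k))) := by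
      intro k; ring
    simp only [this, Finset.sum_add_distrib, s1, s2, s12]
    simp
  have key : (n : ℝ) = 4 * (Finset.univ.filter P).card := by
    rw [← total]
    simp only [expand]
    rw [← Finset.sum_filter, Finset.sum_const, nsmul_eq_mul]
    ring
  have : n = 4 * (Finset.univ.filter P).card := by exact_mod_cast key
  exact ⟨_, this⟩
end

section
/- Let h be an n×n complex Hadamard matrix all of whose entries are l-th roots of unity, and set ζ = exp(2πi/l). Then det(h) belongs to the subring ℤ[ζ] of ℂ generated by ζ, and det(h)·conj(det(h)) = nⁿ. In particular there exists d ∈ ℤ[ζ] with |d|² = nⁿ. -/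
set_option maxHeartbeats 1000000


/-- de Launey obstruction: For an `n×n` complex Hadamard matrix with
entries `l`-th roots of unity and `ζ = exp(2πi/l)`, the determinant lies in the subring
`ℤ[ζ] ⊆ ℂ` generated by `ζ` and satisfies `det(h)·conj(det(h)) = nⁿ`; in particular
there is `d ∈ ℤ[ζ]` with `|d|² = nⁿ`. -/
theorem stmt_9 (l n : ℕ) (hl : 1 ≤ l)
    (h : Matrix (Fin n) (Fin n) ℂ)
    (hmod : ∀ i j, ‖h i j‖ = 1)
    (hent : ∀ i j, h i j ^ l = 1)
    (horth : ∀ i₁ i₂, i₁ ≠ i₂ → ∑ k, h i₁ k * (starRingEnd ℂ) (h i₂ k) = 0) :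
    h.det ∈ Subring.closure ({Complex.exp (2 * Real.pi * Complex.I / l)} : Set ℂ) ∧
    h.det * (starRingEnd ℂ) h.det = (n : ℂ) ^ n ∧
    ∃ d ∈ Subring.closure ({Complex.exp (2 * Real.pi * Complex.I / l)} : Set ℂ),
      d * (starRingEnd ℂ) d = (n : ℂ) ^ n := by
  set ζ := Complex.exp (2 * Real.pi * Complex.I / l) with hζ
  have hprim : IsPrimitiveRoot ζ l := Complex.isPrimitiveRoot_exp l (by omega)
  have hmem : ∀ i j, h i j ∈ Subring.closure ({ζ} : Set ℂ) := by
    intro i j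
    haveI : NeZero l := ⟨by omega⟩
    obtain ⟨k, -, hk⟩ := hprim.eq_pow_of_pow_eq_one (hent i j)
    have hm : ζ ∈ Subring.closure ({ζ} : Set ℂ) :=
      Subring.subset_closure (Set.mem_singleton _)
    have := pow_mem hm k
    rwa [hk] at this
  have hdet : h.det ∈ Subring.closure ({ζ} : Set ℂ) := by
    rw [Matrix.det_apply]
    exact Subring.sum_mem _ fun σ _ =>
      Subring.zsmul_mem _ (Subring.prod_mem _ fun i _ => hmem _ _) _
  have hHH : h * h.conjTranspose = (n : ℂ) • 1 := by
    ext i j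
    simp only [Matrix.mul_apply, Matrix.conjTranspose_apply, Matrix.smul_apply,
      Matrix.one_apply]
    by_cases hij : i = j
    · subst hij
      have hone : ∀ k : Fin n, h i k * star (h i k) = 1 := by
        intro k
        rw [Complex.star_def, Complex.mul_conj, Complex.normSq_eq_norm_sq]
        norm_num [hmod i k]
      simp only [Complex.star_def] at hone
      simp [hone, Finset.sum_const]
    · have := horth i j hij
      simp only [Complex.star_def]
      simp [this, hij]
  have h2 : h.det * (starRingEnd ℂ) h.det = (n : ℂ) ^ n := by
    have hc := congrArg Matrix.det hHH
    rw [Matrix.det_mul, Matrix.det_conjTranspose, Matrix.det_smul, Matrix.det_one,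
      mul_one] at hc
    simpa [Complex.star_def, Fintype.card_fin] using hc
  exact ⟨hdet, h2, h.det, hdet, h2⟩
end

section
/- Let p ≥ 3 be a prime, let n = p + 2, and let b ≥ 1. Then there is no n×n complex Hadamard matrix all of whose entries are (2·p^b)-th roots of unity. -/
open Polynomial Finset Complex

lemma sign_sum_dvd (p b : ℕ) (hp : p.Prime) (hp2 : p ≠ 2) (hb : 1 ≤ b) {n : ℕ}
    (z : Fin n → ℂ) (hz : ∀ k, z k ^ (2 * p ^ b) = 1) (hsum : ∑ k, z k = 0) :
    (p : ℤ) ∣ ∑ k, (if z k ^ (p ^ b) = 1 then (1 : ℤ) else -1) := by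
  haveI : Fact p.Prime := ⟨hp⟩
  obtain ⟨b, rfl⟩ : ∃ b', b = b' + 1 := ⟨b - 1, by omega⟩
  set m := p ^ (b + 1) with hm
  have hm0 : m ≠ 0 := pow_ne_zero _ hp.pos.ne'
  haveI : NeZero m := ⟨hm0⟩
  have hmodd : Odd m := (hp.odd_of_ne_two hp2).pow
  have hε2 : ∀ k, (z k ^ m) ^ 2 = 1 := by
    intro k; rw [← pow_mul, mul_comm]; exact hz k
  have hw : ∀ k, (z k * z k ^ m) ^ m = 1 := by
    intro k
    obtain ⟨t, ht⟩ := hmodd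
    have h1 : (z k * z k ^ m) ^ m = (z k ^ m) ^ (1 + m) := by
      rw [mul_pow, ← pow_mul, ← pow_add]; ring_nf
    have he : 1 + m = 2 * (t + 1) := by rw [ht]; ring
    rw [h1, he, pow_mul, hε2, one_pow]
  set ζ : ℂ := Complex.exp (2 * Real.pi * I / m) with hζdef
  have hζ : IsPrimitiveRoot ζ m := Complex.isPrimitiveRoot_exp m hm0
  choose a ha hζa using fun k => hζ.eq_pow_of_pow_eq_one (hw k)
  set ε : Fin n → ℤ := fun k => if z k ^ m = 1 then 1 else -1 with hεdef
  have hcast : ∀ k, ((ε k : ℤ) : ℂ) = z k ^ m := by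
    intro k
    by_cases h1 : z k ^ m = 1
    · simp [hεdef, h1]
    · have hms : z k ^ m * z k ^ m = 1 := by
        have := hε2 k; rwa [sq] at this
      have h2 : z k ^ m = -1 := by
        rcases mul_self_eq_one_iff.mp hms with h' | h'
        · exact absurd h' h1
        · exact h'
      show ((if z k ^ m = 1 then (1:ℤ) else -1 : ℤ) : ℂ) = z k ^ m
      rw [if_neg h1, h2]; norm_num
  set f : ℤ[X] := ∑ k, C (ε k) * X ^ (a k) with hf
  have hfζ : aeval ζ f = 0 := by
    rw [hf, map_sum]
    have : ∀ k : Fin n, aeval ζ (C (ε k) * X ^ (a k)) = z k := by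
      intro k
      rw [map_mul, aeval_C, map_pow, aeval_X, hζa k]
      have : algebraMap ℤ ℂ (ε k) = ((ε k : ℤ) : ℂ) := by
        simp [Algebra.algebraMap_eq_smul_one]
      rw [this, hcast k]
      calc z k ^ m * (z k * z k ^ m) = z k * (z k ^ m) ^ 2 := by ring
        _ = z k := by rw [hε2, mul_one]
    rw [Finset.sum_congr rfl fun k _ => this k, hsum]
  have hint : IsIntegral ℤ ζ := hζ.isIntegral (Nat.pos_of_ne_zero hm0)
  have hdvd : minpoly ℤ ζ ∣ f := minpoly.isIntegrallyClosed_dvd hint hfζ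
  rw [← Polynomial.cyclotomic_eq_minpoly hζ (Nat.pos_of_ne_zero hm0)] at hdvd
  obtain ⟨g, hg⟩ := hdvd
  have heval := congrArg (Polynomial.eval (1 : ℤ)) hg
  rw [Polynomial.eval_mul, hm, Polynomial.eval_one_cyclotomic_prime_pow] at heval
  have hev : f.eval 1 = ∑ k, ε k := by
    rw [hf, Polynomial.eval_finset_sum]
    exact Finset.sum_congr rfl fun k _ => by simp
  exact ⟨g.eval 1, by rw [← hev, heval]⟩

/-- For a prime `p ≥ 3`, `n = p + 2` and `b ≥ 1`, there is no `n×n`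
complex Hadamard matrix all of whose entries are `(2·p^b)`-th roots of unity. -/
theorem stmt_11 (p b : ℕ) (hp : p.Prime) (hp3 : 3 ≤ p) (hb : 1 ≤ b) :
    ¬ ∃ h : Matrix (Fin (p + 2)) (Fin (p + 2)) ℂ,
      (∀ i j, ‖h i j‖ = 1) ∧
      (∀ i j, h i j ^ (2 * p ^ b) = 1) ∧
      (∀ i₁ i₂, i₁ ≠ i₂ → ∑ k, h i₁ k * (starRingEnd ℂ) (h i₂ k) = 0) := by
  rintro ⟨h, -, hroot, horth⟩
  have hp2 : p ≠ 2 := by omega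
  have hpodd : p % 2 = 1 := Nat.odd_iff.mp (hp.odd_of_ne_two hp2)
  set m := p ^ b with hm
  set v : Fin (p+2) → Fin (p+2) → ℤ := fun i k => if h i k ^ m = 1 then 1 else -1 with hv
  have hsq : ∀ i k, (h i k ^ m) ^ 2 = 1 := by
    intro i k; rw [← pow_mul, mul_comm]; exact hroot i k
  have hpm : ∀ i k, h i k ^ m = 1 ∨ h i k ^ m = -1 := by
    intro i k
    have := hsq i k; rw [sq] at this
    exact mul_self_eq_one_iff.mp this
  have hvcast : ∀ i k, ((v i k : ℤ) : ℂ) = h i k ^ m := by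
    intro i k
    show ((if h i k ^ m = 1 then (1:ℤ) else -1 : ℤ) : ℂ) = h i k ^ m
    rcases hpm i k with h1 | h1
    · rw [if_pos h1, h1]; norm_num
    · have h2 : ¬ h i k ^ m = 1 := by
        rw [h1]; intro hc
        have : (2 : ℂ) = 0 := by linear_combination -hc
        norm_num at this
      rw [if_neg h2, h1]; norm_num
  have hvpm : ∀ i k, v i k = 1 ∨ v i k = -1 := by
    intro i k
    by_cases h1 : h i k ^ m = 1
    · left; show (if h i k ^ m = 1 then (1:ℤ) else -1) = 1; rw [if_pos h1]
    · right; show (if h i k ^ m = 1 then (1:ℤ) else -1) = -1; rw [if_neg h1]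
  have key : ∀ i j : Fin (p+2), i ≠ j →
      ((p:ℤ) + 2) - 2 * ((univ.filter fun k => ¬ v i k = v j k).card : ℤ) = p ∨
      ((p:ℤ) + 2) - 2 * ((univ.filter fun k => ¬ v i k = v j k).card : ℤ) = -p := by
    intro i j hij
    set z : Fin (p+2) → ℂ := fun k => h i k * (starRingEnd ℂ) (h j k) with hz
    have hz1 : ∀ k, z k ^ (2 * p ^ b) = 1 := by
      intro k
      show (h i k * (starRingEnd ℂ) (h j k)) ^ (2 * p ^ b) = 1
      rw [mul_pow, ← map_pow, hroot i k, hroot j k, map_one, mul_one]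
    have hdvd := sign_sum_dvd p b hp hp2 hb z hz1 (horth i j hij)
    have hterm : ∀ k, (if z k ^ (p ^ b) = 1 then (1:ℤ) else -1) = v i k * v j k := by
      intro k
      have hzm : z k ^ m = ((v i k * v j k : ℤ) : ℂ) := by
        show (h i k * (starRingEnd ℂ) (h j k)) ^ m = _
        rw [mul_pow, ← map_pow, ← hvcast i k, ← hvcast j k, ← map_intCast (starRingEnd ℂ)]
        rw [map_intCast, map_intCast]
        push_cast
        ring
      rcases hvpm i k with h1 | h1 <;> rcases hvpm j k with h2 | h2 <;>
        rw [h1, h2] at hzm ⊢ <;> rw [← hm, hzm] <;> norm_num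
    rw [Finset.sum_congr rfl fun k _ => hterm k] at hdvd
    have hprod : ∀ k, v i k * v j k = if v i k = v j k then 1 else -1 := by
      intro k
      rcases hvpm i k with h1 | h1 <;> rcases hvpm j k with h2 | h2 <;>
        rw [h1, h2] <;> norm_num
    rw [Finset.sum_congr rfl fun k _ => hprod k, Finset.sum_ite,
      Finset.sum_const, Finset.sum_const] at hdvd
    have hcard := Finset.card_filter_add_card_filter_not
      (s := (univ : Finset (Fin (p+2)))) (p := fun k => v i k = v j k)
    rw [Finset.card_univ, Fintype.card_fin] at hcard
    obtain ⟨c, hc⟩ := hdvd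
    set d := (univ.filter fun k => ¬ v i k = v j k).card with hd
    set e := (univ.filter fun k => v i k = v j k).card with he
    have hc' : (p : ℤ) * c = (e : ℤ) - d := by
      rw [← hc]; push_cast; ring
    have hed : e + d = p + 2 := hcard
    have hcases : c ≤ -2 ∨ c = -1 ∨ c = 0 ∨ c = 1 ∨ 2 ≤ c := by omega
    have hp3' : (3 : ℤ) ≤ p := by exact_mod_cast hp3
    rcases hcases with hcc | hcc | hcc | hcc | hcc
    · exfalso
      have : (p : ℤ) * c ≤ p * (-2) := by
        apply mul_le_mul_of_nonneg_left hcc (by linarith)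
      omega
    · right; rw [hcc] at hc'; omega
    · exfalso; rw [hcc] at hc'; omega
    · left; rw [hcc] at hc'; omega
    · exfalso
      have : (p : ℤ) * 2 ≤ p * c := by
        apply mul_le_mul_of_nonneg_left hcc (by linarith)
      omega
  -- three distinct rows
  set i0 : Fin (p+2) := ⟨0, by omega⟩
  set i1 : Fin (p+2) := ⟨1, by omega⟩
  set i2 : Fin (p+2) := ⟨2, by omega⟩
  have h01 := key i0 i1 (by simp [i0, i1, Fin.ext_iff])
  have h02 := key i0 i2 (by simp [i0, i2, Fin.ext_iff])
  have h12 := key i1 i2 (by simp [i1, i2, Fin.ext_iff])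
  set A := (univ.filter fun k => ¬ v i0 k = v i1 k) with hA
  set B := (univ.filter fun k => ¬ v i0 k = v i2 k) with hB
  have hC : (univ.filter fun k => ¬ v i1 k = v i2 k) = (A ∪ B) \ (A ∩ B) := by
    ext k
    simp only [hA, hB, Finset.mem_filter, Finset.mem_univ, true_and, Finset.mem_sdiff,
      Finset.mem_union, Finset.mem_inter]
    rcases hvpm i0 k with h0 | h0 <;> rcases hvpm i1 k with h1 | h1 <;>
      rcases hvpm i2 k with h2 | h2 <;> rw [h0, h1, h2] <;> norm_num
  rw [hC] at h12
  have hsub : (A ∩ B) ⊆ (A ∪ B) :=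
    Finset.Subset.trans Finset.inter_subset_left Finset.subset_union_left
  have hcard3 : ((A ∪ B) \ (A ∩ B)).card = (A ∪ B).card - (A ∩ B).card :=
    Finset.card_sdiff_of_subset hsub
  have hcard1 : (A ∪ B).card + (A ∩ B).card = A.card + B.card :=
    Finset.card_union_add_card_inter A B
  have hcard4 : (A ∩ B).card ≤ (A ∪ B).card := Finset.card_le_card hsub
  have hub : (A ∪ B).card ≤ p + 2 := by
    have := Finset.card_le_univ (A ∪ B)
    rwa [Fintype.card_fin] at this
  have hcard5 : (A ∩ B).card ≤ A.card := Finset.card_le_card Finset.inter_subset_left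
  have hcard6 : (A ∩ B).card ≤ B.card := Finset.card_le_card Finset.inter_subset_right
  rw [hcard3] at h12
  set α := A.card with hα
  set β := B.card with hβ
  set γ := (A ∩ B).card with hγ
  set u := (A ∪ B).card with hu
  clear_value α β γ u
  omega
end

section
/- Let j = exp(2πi/3) and let h be a 4×6 matrix with unimodular complex entries such that for every pair of distinct rows u, v of h, the multiset { u_k·conj(v_k) : 1 ≤ k ≤ 6 } equals { x, jx, j²x, y, jy, j²y } for some unimodular x, y. Then h is equivalent to a 4×6 matrix all of whose 24 entries lie in {1, j, j²}. -/
/-- The primitive cube root of unity `j = exp(2πi/3)`. -/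
noncomputable def ω : ℂ := Complex.exp (2 * Real.pi * Complex.I / 3)

/-- The multiset of entrywise products `h i₁ k * conj (h i₂ k)` of two rows of `h`. -/
def rowProd {m n : ℕ} (h : Matrix (Fin m) (Fin n) ℂ) (i₁ i₂ : Fin m) : Multiset ℂ :=
  Multiset.map (fun k => h i₁ k * (starRingEnd ℂ) (h i₂ k)) Finset.univ.val

/-- The pair of rows `(i₁, i₂)` is binary: the multiset of entrywise products is
`{x, -x, y, -y, z, -z}` for some unimodular `x, y, z`. -/
def BinaryPair {m n : ℕ} (h : Matrix (Fin m) (Fin n) ℂ) (i₁ i₂ : Fin m) : Prop :=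
  ∃ x y z : ℂ, ‖x‖ = 1 ∧ ‖y‖ = 1 ∧ ‖z‖ = 1 ∧
    rowProd h i₁ i₂ = {x, -x, y, -y, z, -z}

/-- The pair of rows `(i₁, i₂)` is ternary: the multiset of entrywise products is
`{x, jx, j²x, y, jy, j²y}` for some unimodular `x, y`. -/
def TernaryPair {m n : ℕ} (h : Matrix (Fin m) (Fin n) ℂ) (i₁ i₂ : Fin m) : Prop :=
  ∃ x y : ℂ, ‖x‖ = 1 ∧ ‖y‖ = 1 ∧
    rowProd h i₁ i₂ = {x, ω * x, ω ^ 2 * x, y, ω * y, ω ^ 2 * y}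

/-- Hadamard equivalence: `k` is obtained from `h` by permuting rows and columns and
multiplying rows and columns by unimodular scalars. -/
def MatEquiv {m n : ℕ} (h k : Matrix (Fin m) (Fin n) ℂ) : Prop :=
  ∃ (σ : Equiv.Perm (Fin m)) (τ : Equiv.Perm (Fin n)) (a : Fin m → ℂ) (b : Fin n → ℂ),
    (∀ i, ‖a i‖ = 1) ∧ (∀ j, ‖b j‖ = 1) ∧
    ∀ i j, k i j = a i * b j * h (σ i) (τ j)

/-- `h` is a complex Hadamard matrix: unimodular entries and pairwise orthogonal rows. -/
def IsCHM {n : ℕ} (h : Matrix (Fin n) (Fin n) ℂ) : Prop :=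
  (∀ i j, ‖h i j‖ = 1) ∧
  ∀ i₁ i₂, i₁ ≠ i₂ → ∑ k, h i₁ k * (starRingEnd ℂ) (h i₂ k) = 0

lemma omega_cube : ω ^ 3 = 1 := by
  have h : (3 : ℂ) * (2 * Real.pi * Complex.I / 3) = 2 * Real.pi * Complex.I := by
    field_simp
  rw [ω, ← Complex.exp_nat_mul]
  push_cast
  rw [h, Complex.exp_two_pi_mul_I]

lemma omega_ne_one : ω ≠ 1 := by
  intro heq
  rw [ω, Complex.exp_eq_one_iff] at heq
  obtain ⟨n, hn⟩ := heq
  have hne : (2 * (Real.pi:ℂ) * Complex.I) ≠ 0 := by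
    simp [Real.pi_ne_zero, Complex.I_ne_zero, Complex.ofReal_ne_zero]
  have h31 : (2 * (Real.pi:ℂ) * Complex.I) * (3 * n) = (2 * (Real.pi:ℂ) * Complex.I) * 1 := by
    linear_combination (-3 : ℂ) * hn
  have h2 : (3 : ℂ) * n = 1 := mul_left_cancel₀ hne h31
  have h3 : (3 * n : ℤ) = 1 := by exact_mod_cast h2
  omega

lemma omega_norm : ‖ω‖ = 1 := by
  have h : (2 * (Real.pi : ℂ) * Complex.I / 3) = ((2 * Real.pi / 3 : ℝ) : ℂ) * Complex.I := by
    push_cast; ring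
  rw [ω, h]
  simpa using Complex.norm_exp_ofReal_mul_I (2 * Real.pi / 3)

lemma omega_ne_zero : ω ≠ 0 := by
  intro h
  have := omega_norm
  rw [h] at this
  simp at this

lemma omega_sq_ne_one : ω ^ 2 ≠ 1 := by
  intro h
  have : ω = 1 := by
    have h3 := omega_cube
    calc ω = ω ^ 3 / ω ^ 2 := by field_simp [omega_ne_zero]
    _ = 1 := by rw [h3, h]; norm_num
  exact omega_ne_one this

lemma omega_sum : 1 + ω + ω ^ 2 = 0 := by
  have h : (ω - 1) * (ω ^ 2 + ω + 1) = ω ^ 3 - 1 := by ring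
  rw [omega_cube, sub_self] at h
  rcases mul_eq_zero.1 h with h1 | h2
  · exact absurd (by linear_combination h1) omega_ne_one
  · linear_combination h2

lemma cube_roots {z : ℂ} (hz : z ^ 3 = 1) : z = 1 ∨ z = ω ∨ z = ω ^ 2 := by
  have key : (z - 1) * ((z - ω) * (z - ω ^ 2)) = 0 := by
    have h1 : ω + ω ^ 2 = -1 := by linear_combination omega_sum
    have h2 : ω * ω ^ 2 = 1 := by
      have := omega_cube; linear_combination this
    calc (z - 1) * ((z - ω) * (z - ω ^ 2))
        = z^3 - (1 + (ω + ω^2)) * z^2 + ((ω + ω^2) + ω * ω^2) * z - ω * ω^2 := by ring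
      _ = 0 := by rw [h1, h2, hz]; ring
  rcases mul_eq_zero.1 key with h | h
  · left; exact sub_eq_zero.1 h
  · rcases mul_eq_zero.1 h with h | h
    · right; left; exact sub_eq_zero.1 h
    · right; right; exact sub_eq_zero.1 h

noncomputable def W (t : ZMod 3) : ℂ := ω ^ t.val

lemma W_zero : W 0 = 1 := by simp [W]
lemma W_one : W 1 = ω := by rw [W, show (1 : ZMod 3).val = 1 from rfl, pow_one]
lemma W_two : W 2 = ω ^ 2 := rfl

lemma zmod3_cases (t : ZMod 3) : t = 0 ∨ t = 1 ∨ t = 2 := by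
  revert t; decide

lemma omega_ne_omega_sq : ω ≠ ω ^ 2 := by
  intro h
  have : ω * 1 = ω * ω := by rw [mul_one]; linear_combination h
  exact omega_ne_one (by symm; exact mul_left_cancel₀ omega_ne_zero this)

lemma W_inj {a b : ZMod 3} (h : W a = W b) : a = b := by
  rcases zmod3_cases a with ha | ha | ha <;> rcases zmod3_cases b with hb | hb | hb <;>
    subst ha <;> subst hb <;>
    simp only [W_zero, W_one, W_two] at h <;>
    first
      | rfl
      | (exact absurd h.symm omega_ne_one)
      | (exact absurd h omega_ne_one)
      | (exact absurd h.symm omega_sq_ne_one)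
      | (exact absurd h omega_sq_ne_one)
      | (exact absurd h omega_ne_omega_sq)
      | (exact absurd h.symm omega_ne_omega_sq)

lemma omega_pow_mod (m : ℕ) : ω ^ m = ω ^ (m % 3) := by
  conv_lhs => rw [← Nat.div_add_mod m 3]
  rw [pow_add, pow_mul, omega_cube, one_pow, one_mul]

lemma W_add (a b : ZMod 3) : W (a + b) = W a * W b := by
  rw [W, W, W, ← pow_add, omega_pow_mod (a.val + b.val), omega_pow_mod ((a+b).val)]
  congr 1
  rw [ZMod.val_add]
  omega

lemma W_ne_zero (t : ZMod 3) : W t ≠ 0 := pow_ne_zero _ omega_ne_zero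

lemma W_cube (t : ZMod 3) : (W t) ^ 3 = 1 := by
  rw [W, ← pow_mul, mul_comm, pow_mul, omega_cube, one_pow]

lemma W_norm (t : ZMod 3) : ‖W t‖ = 1 := by
  rw [W, norm_pow, omega_norm, one_pow]

lemma conj_W (t : ZMod 3) : (starRingEnd ℂ) (W t) = W (-t) := by
  have h1 : (starRingEnd ℂ) (W t) * W t = 1 := by
    rw [mul_comm, Complex.mul_conj]
    norm_cast
    rw [← Complex.sq_norm]
    have := W_norm t
    rw [this]; norm_num
  have h2 : W (-t) * W t = 1 := by rw [← W_add]; simp [W_zero]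
  exact mul_right_cancel₀ (W_ne_zero t) (h1.trans h2.symm)

lemma mem_range_W {z : ℂ} (hz : z ^ 3 = 1) : ∃ t, z = W t := by
  rcases cube_roots hz with h | h | h
  · exact ⟨0, by rw [W_zero, h]⟩
  · exact ⟨1, by rw [W_one, h]⟩
  · exact ⟨2, by rw [W_two, h]⟩

lemma W_cancel {a b : ZMod 3} {x : ℂ} (hx : x ≠ 0) (h : W a * x = W b * x) : a = b :=
  W_inj (mul_right_cancel₀ hx h)

noncomputable def M6 (x y : ℂ) : Multiset ℂ := {x, ω * x, ω ^ 2 * x, y, ω * y, ω ^ 2 * y}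
noncomputable def T3 (x : ℂ) : Multiset ℂ := {x, ω * x, ω ^ 2 * x}

lemma M6_eq_add (x y : ℂ) : M6 x y = T3 x + T3 y := rfl

lemma M6_comm (x y : ℂ) : M6 x y = M6 y x := by
  rw [M6_eq_add, M6_eq_add, add_comm]

lemma cube_omega_mul (x : ℂ) : (ω * x) ^ 3 = x ^ 3 := by
  rw [mul_pow, omega_cube, one_mul]

lemma cube_omega_sq_mul (x : ℂ) : (ω ^ 2 * x) ^ 3 = x ^ 3 := by
  rw [mul_pow, ← pow_mul]
  norm_num
  rw [show (6:ℕ) = 3*2 from rfl, pow_mul, omega_cube, one_pow, one_mul]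

lemma cube_W_mul (t : ZMod 3) (x : ℂ) : (W t * x) ^ 3 = x ^ 3 := by
  rw [mul_pow, W_cube, one_mul]

section Extraction

variable {w : Fin 6 → ℂ} {x y : ℂ}

lemma mem6 (hEq : Multiset.map w Finset.univ.val = M6 x y) (k : Fin 6) :
    w k = x ∨ w k = ω * x ∨ w k = ω ^ 2 * x ∨ w k = y ∨ w k = ω * y ∨ w k = ω ^ 2 * y := by
  have hk : w k ∈ Multiset.map w Finset.univ.val :=
    Multiset.mem_map_of_mem _ (Finset.mem_univ_val _)
  rw [hEq] at hk
  simpa [M6] using hk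

lemma cube6 (hEq : Multiset.map w Finset.univ.val = M6 x y) (k : Fin 6) :
    (w k) ^ 3 = x ^ 3 ∨ (w k) ^ 3 = y ^ 3 := by
  rcases mem6 hEq k with h|h|h|h|h|h <;> rw [h] <;>
    simp [cube_omega_mul, cube_omega_sq_mul]

lemma ex6x (hEq : Multiset.map w Finset.univ.val = M6 x y) (t : ZMod 3) :
    ∃ k, w k = W t * x := by
  have hmem : W t * x ∈ M6 x y := by
    have h3 : t = 0 ∨ t = 1 ∨ t = 2 := by revert t; decide
    rcases h3 with h|h|h <;> subst h <;>
      simp [M6, W_zero, W_one, W_two]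
  rw [← hEq] at hmem
  obtain ⟨k, _, hk⟩ := Multiset.mem_map.1 hmem
  exact ⟨k, hk⟩

lemma card_filter_eq (hEq : Multiset.map w Finset.univ.val = M6 x y)
    (p : ℂ → Prop) [DecidablePred p] :
    (Finset.univ.filter (fun k => p (w k))).card = Multiset.countP p (M6 x y) := by
  rw [← hEq, Multiset.countP_map]
  rfl

lemma countP_M6 (p : ℂ → Prop) [DecidablePred p] (x y : ℂ)
    (h1 : p x) (h2 : p (ω*x)) (h3 : p (ω^2*x))
    (h4 : ¬ p y) (h5 : ¬ p (ω*y)) (h6 : ¬ p (ω^2*y)) :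
    Multiset.countP p (M6 x y) = 3 := by
  have e : M6 x y = x ::ₘ (ω*x) ::ₘ (ω^2*x) ::ₘ y ::ₘ (ω*y) ::ₘ (ω^2*y) ::ₘ 0 := rfl
  simp only [e, Multiset.countP_cons, Multiset.countP_zero, h1, h2, h3, h4, h5, h6,
    if_true, if_false, ite_true, ite_false]

lemma triple_distinct {x : ℂ} (hx : x ≠ 0) :
    x ≠ ω * x ∧ x ≠ ω ^ 2 * x ∧ ω * x ≠ ω ^ 2 * x := by
  refine ⟨?_, ?_, ?_⟩
  · intro h
    exact omega_ne_one (mul_right_cancel₀ hx (by rw [one_mul, ← h])).symm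
  · intro h
    exact omega_sq_ne_one (mul_right_cancel₀ hx (by rw [one_mul, ← h])).symm
  · intro h
    exact omega_ne_omega_sq (mul_right_cancel₀ hx h)

lemma countP_T3_le (x V : ℂ) (hx : x ≠ 0) [DecidablePred (fun z : ℂ => z = V)] :
    Multiset.countP (fun z => z = V) (T3 x) ≤ 1 := by
  obtain ⟨d1, d2, d3⟩ := triple_distinct hx
  have e : T3 x = x ::ₘ (ω*x) ::ₘ (ω^2*x) ::ₘ 0 := rfl
  simp only [e, Multiset.countP_cons, Multiset.countP_zero]
  by_cases h1 : x = V
  · have n2 : ¬ (ω * x = V) := fun h => d1 (h1.trans h.symm)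
    have n3 : ¬ (ω ^ 2 * x = V) := fun h => d2 (h1.trans h.symm)
    rw [if_pos h1, if_neg n2, if_neg n3]
  · by_cases h2 : ω * x = V
    · have n3 : ¬ (ω ^ 2 * x = V) := fun h => d3 (h2.trans h.symm)
      rw [if_pos h2, if_neg h1, if_neg n3]
    · by_cases h3 : ω ^ 2 * x = V
      · rw [if_pos h3, if_neg h1, if_neg h2]
      · rw [if_neg h1, if_neg h2, if_neg h3]; norm_num

lemma count_le_two (hEq : Multiset.map w Finset.univ.val = M6 x y)
    (hx : x ≠ 0) (hy : y ≠ 0) (V : ℂ) :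
    (Finset.univ.filter (fun k => w k = V)).card ≤ 2 := by
  classical
  have h1 : (Finset.univ.filter (fun k => w k = V)).card
      = Multiset.countP (fun z => z = V) (M6 x y) := card_filter_eq hEq (fun z => z = V)
  rw [h1, M6_eq_add, Multiset.countP_add]
  have b1 := countP_T3_le x V hx
  have b2 := countP_T3_le y V hy
  omega

lemma card3 (hEq : Multiset.map w Finset.univ.val = M6 x y) (hXY : x ^ 3 ≠ y ^ 3) :
    (Finset.univ.filter (fun k => (w k) ^ 3 = x ^ 3)).card = 3 := by
  classical
  have h1 : (Finset.univ.filter (fun k => (w k) ^ 3 = x ^ 3)).card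
      = Multiset.countP (fun z => z ^ 3 = x ^ 3) (M6 x y) := card_filter_eq hEq (fun z => z ^ 3 = x ^ 3)
  rw [h1]
  exact countP_M6 _ x y rfl (cube_omega_mul x) (cube_omega_sq_mul x)
    (fun h => hXY h.symm)
    (fun h => hXY ((cube_omega_mul y) ▸ h).symm)
    (fun h => hXY ((cube_omega_sq_mul y) ▸ h).symm)

lemma split_extract (hEq : Multiset.map w Finset.univ.val = M6 x y)
    (hx : x ≠ 0) (hXY : x ^ 3 ≠ y ^ 3) :
    ∃ f : Fin 6 → ZMod 3,
      (∀ k, (w k) ^ 3 = x ^ 3 → w k = W (f k) * x) ∧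
      (∀ t, ∃ k, (w k) ^ 3 = x ^ 3 ∧ f k = t) := by
  have hcoset : ∀ k, (w k) ^ 3 = x ^ 3 → ∃ t, w k = W t * x := by
    intro k hk
    rcases mem6 hEq k with h|h|h|h|h|h
    · exact ⟨0, by rw [W_zero, one_mul, h]⟩
    · exact ⟨1, by rw [W_one]; exact h⟩
    · exact ⟨2, by rw [W_two]; exact h⟩
    · exact absurd ((h ▸ hk).symm) hXY
    · exact absurd (((cube_omega_mul y) ▸ (h ▸ hk)).symm) hXY
    · exact absurd (((cube_omega_sq_mul y) ▸ (h ▸ hk)).symm) hXY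
  have hch : ∀ k, ∃ t, ((w k) ^ 3 = x ^ 3 → w k = W t * x) := by
    intro k
    by_cases hk : (w k) ^ 3 = x ^ 3
    · obtain ⟨t, ht⟩ := hcoset k hk; exact ⟨t, fun _ => ht⟩
    · exact ⟨0, fun h => absurd h hk⟩
  obtain ⟨f, hf⟩ := Classical.axiomOfChoice hch
  refine ⟨f, hf, fun t => ?_⟩
  obtain ⟨k, hk⟩ := ex6x hEq t
  have hk3 : (w k) ^ 3 = x ^ 3 := by rw [hk, cube_W_mul]
  refine ⟨k, hk3, W_cancel hx ((hf k hk3).symm.trans hk)⟩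

end Extraction

def SurjOn (A : Finset (Fin 6)) (f : Fin 6 → ZMod 3) : Prop := ∀ t, ∃ k ∈ A, f k = t

lemma zd1 : ∀ F : ZMod 3 → ZMod 3, (∀ s, ∃ t, F t = s) →
    ((∀ s, ∃ t, t - F t = s) ∨ (∃ c, ∀ t, t - F t = c)) := by decide

lemma zd2 : ∀ F G : ZMod 3 → ZMod 3, (∀ s, ∃ t, F t = s) → (∀ s, ∃ t, G t = s) →
    (∀ s, ∃ t, t - F t = s) → (∀ s, ∃ t, t - G t = s) →
    (∀ s, ∃ t, F t - G t = s) → False := by decide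

section S
variable {A : Finset (Fin 6)} {f f' f1 f2 f3 : Fin 6 → ZMod 3}

lemma sec (hA : A.card = 3) (hf : SurjOn A f) :
    ∃ g : ZMod 3 → Fin 6, (∀ t, g t ∈ A ∧ f (g t) = t) ∧ ∀ k ∈ A, ∃ t, g t = k := by
  choose g hgA hgf using hf
  have ginj : Function.Injective g := by
    intro t t' h
    rw [← hgf t, ← hgf t', h]
  have himg : Finset.univ.image g = A := by
    apply Finset.eq_of_subset_of_card_le
    · intro k hk
      obtain ⟨t, _, rfl⟩ := Finset.mem_image.1 hk
      exact hgA t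
    · rw [Finset.card_image_of_injective _ ginj, hA]
      simp
  refine ⟨g, fun t => ⟨hgA t, hgf t⟩, fun k hk => ?_⟩
  rw [← himg] at hk
  obtain ⟨t, _, ht⟩ := Finset.mem_image.1 hk
  exact ⟨t, ht⟩

lemma diff_surj_or_const (hA : A.card = 3) (hf : SurjOn A f) (hf' : SurjOn A f') :
    SurjOn A (fun k => f k - f' k) ∨ ∃ c, ∀ k ∈ A, f k - f' k = c := by
  obtain ⟨g, hg1, hg2⟩ := sec hA hf
  have hF' : ∀ s, ∃ t, f' (g t) = s := by
    intro s
    obtain ⟨k, hkA, hk⟩ := hf' s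
    obtain ⟨t, rfl⟩ := hg2 k hkA
    exact ⟨t, hk⟩
  rcases zd1 (fun t => f' (g t)) hF' with h | ⟨c, hc⟩
  · left
    intro s
    obtain ⟨t, ht⟩ := h s
    refine ⟨g t, (hg1 t).1, ?_⟩
    show f (g t) - f' (g t) = s
    rw [(hg1 t).2]; exact ht
  · right
    refine ⟨c, fun k hk => ?_⟩
    obtain ⟨t, rfl⟩ := hg2 k hk
    rw [(hg1 t).2]
    exact hc t

lemma pigeon (hA : A.card = 3) (h1 : SurjOn A f1) (h2 : SurjOn A f2) (h3 : SurjOn A f3)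
    (h12 : SurjOn A (fun k => f1 k - f2 k)) (h13 : SurjOn A (fun k => f1 k - f3 k))
    (h23 : SurjOn A (fun k => f2 k - f3 k)) : False := by
  obtain ⟨g, hg1, hg2⟩ := sec hA h1
  have hF : ∀ s, ∃ t, f2 (g t) = s := fun s => by
    obtain ⟨k, hkA, hk⟩ := h2 s
    obtain ⟨t, rfl⟩ := hg2 k hkA
    exact ⟨t, hk⟩
  have hG : ∀ s, ∃ t, f3 (g t) = s := fun s => by
    obtain ⟨k, hkA, hk⟩ := h3 s
    obtain ⟨t, rfl⟩ := hg2 k hkA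
    exact ⟨t, hk⟩
  have hIF : ∀ s, ∃ t, t - f2 (g t) = s := fun s => by
    obtain ⟨k, hkA, hk⟩ := h12 s
    obtain ⟨t, rfl⟩ := hg2 k hkA
    have hk' : f1 (g t) - f2 (g t) = s := hk
    rw [(hg1 t).2] at hk'
    exact ⟨t, hk'⟩
  have hIG : ∀ s, ∃ t, t - f3 (g t) = s := fun s => by
    obtain ⟨k, hkA, hk⟩ := h13 s
    obtain ⟨t, rfl⟩ := hg2 k hkA
    have hk' : f1 (g t) - f3 (g t) = s := hk
    rw [(hg1 t).2] at hk'
    exact ⟨t, hk'⟩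
  have hFG : ∀ s, ∃ t, f2 (g t) - f3 (g t) = s := fun s => by
    obtain ⟨k, hkA, hk⟩ := h23 s
    obtain ⟨t, rfl⟩ := hg2 k hkA
    exact ⟨t, hk⟩
  exact zd2 _ _ hF hG hIF hIG hFG

end S

open Finset in
lemma card_le_contr {w : Fin 6 → ℂ} {x y : ℂ} (hEq : Multiset.map w Finset.univ.val = M6 x y)
    (hx : x ≠ 0) (hy : y ≠ 0) {A : Finset (Fin 6)} (hA : A.card = 3) (V : ℂ)
    (hcons : ∀ k ∈ A, w k = V) : False := by
  classical
  have hsub : A ⊆ Finset.univ.filter (fun k => w k = V) := fun k hk =>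
    Finset.mem_filter.2 ⟨Finset.mem_univ _, hcons k hk⟩
  have h1 := Finset.card_le_card hsub
  have h2 := count_le_two hEq hx hy V
  omega

lemma zmod3_cases' (t : ZMod 3) : t = 0 ∨ t = 1 ∨ t = 2 := by revert t; decide

lemma W_mul_mem_x (r : ZMod 3) (x y : ℂ) : W r * x ∈ M6 x y := by
  rcases zmod3_cases' r with h|h|h <;> subst h <;> simp [M6, W_zero, W_one, W_two]

lemma W_mul_mem_y (r : ZMod 3) (x y : ℂ) : W r * y ∈ M6 x y := by
  rcases zmod3_cases' r with h|h|h <;> subst h <;> simp [M6, W_zero, W_one, W_two]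

lemma z_shift {t : ZMod 3} {z v : ℂ} (h : W t * z = v) : z = W (-t) * v := by
  calc z = (W (-t) * W t) * z := by rw [← W_add]; simp [W_zero]
    _ = W (-t) * (W t * z) := by ring
    _ = W (-t) * v := by rw [h]

lemma coset_base {w : Fin 6 → ℂ} {x' y' : ℂ}
    (hEqw : Multiset.map w Finset.univ.val = M6 x' y')
    {k0 : Fin 6} {t0 : ZMod 3} {z : ℂ} (h0 : w k0 = W t0 * z) :
    ∃ s : ZMod 3, z = W s * x' ∨ z = W s * y' := by
  rcases mem6 hEqw k0 with h|h|h|h|h|h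
  · exact ⟨-t0, Or.inl (z_shift (h0.symm.trans h))⟩
  · refine ⟨-t0 + 1, Or.inl ?_⟩
    have := z_shift (h0.symm.trans h)
    rw [this, ← W_one, ← mul_assoc, ← W_add]
  · refine ⟨-t0 + 2, Or.inl ?_⟩
    have := z_shift (h0.symm.trans h)
    rw [this, ← W_two, ← mul_assoc, ← W_add]
  · exact ⟨-t0, Or.inr (z_shift (h0.symm.trans h))⟩
  · refine ⟨-t0 + 1, Or.inr ?_⟩
    have := z_shift (h0.symm.trans h)
    rw [this, ← W_one, ← mul_assoc, ← W_add]
  · refine ⟨-t0 + 2, Or.inr ?_⟩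
    have := z_shift (h0.symm.trans h)
    rw [this, ← W_two, ← mul_assoc, ← W_add]

lemma surj_from_split {w : Fin 6 → ℂ} {x' y' : ℂ}
    (hEqw : Multiset.map w Finset.univ.val = M6 x' y')
    {A : Finset (Fin 6)} (hAne : A.Nonempty) {z : ℂ} (hz : z ≠ 0)
    {φ : Fin 6 → ZMod 3} (hφ : ∀ k ∈ A, w k = W (φ k) * z)
    (hoff : ∀ k, k ∉ A → (w k) ^ 3 ≠ z ^ 3) : SurjOn A φ := by
  obtain ⟨k0, hk0⟩ := hAne
  obtain ⟨s, hs⟩ := coset_base hEqw (hφ k0 hk0)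
  intro t
  have hmem : W t * z ∈ M6 x' y' := by
    rcases hs with hs | hs
    · rw [hs, ← mul_assoc, ← W_add]; exact W_mul_mem_x _ _ _
    · rw [hs, ← mul_assoc, ← W_add]; exact W_mul_mem_y _ _ _
  rw [← hEqw] at hmem
  obtain ⟨k, _, hk⟩ := Multiset.mem_map.1 hmem
  have hk3 : (w k) ^ 3 = z ^ 3 := by rw [hk, cube_W_mul]
  have hkA : k ∈ A := by
    by_contra hno
    exact hoff k hno hk3
  exact ⟨k, hkA, W_cancel hz ((hφ k hkA).symm.trans hk)⟩

lemma conj_ne_zero {z : ℂ} (hz : z ≠ 0) : (starRingEnd ℂ) z ≠ 0 := by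
  intro h
  apply hz
  have := congrArg (starRingEnd ℂ) h
  simpa using this

lemma cube_mul_conj (a b : ℂ) : (a * (starRingEnd ℂ) b) ^ 3 = a ^ 3 * (starRingEnd ℂ) (b ^ 3) := by
  rw [mul_pow, map_pow]

lemma norm_one_ne_zero {z : ℂ} (hz : ‖z‖ = 1) : z ≠ 0 := by
  intro h; rw [h] at hz; simp at hz

-- The main per-row lemma.
lemma row_lemma (u1 u : Fin 6 → ℂ) (x y : ℂ)
    (hx0 : x ≠ 0) (hXY : x ^ 3 ≠ y ^ 3)
    (A : Finset (Fin 6)) (hA : A.card = 3)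
    (hmemA : ∀ k, k ∈ A ↔ (u1 k) ^ 3 = x ^ 3)
    (hoffA : ∀ k, k ∉ A → (u1 k) ^ 3 = y ^ 3)
    (ε : Fin 6 → ZMod 3) (hε : ∀ k ∈ A, u1 k = W (ε k) * x) (hεs : SurjOn A ε)
    (Tu : ∃ xi yi : ℂ, ‖xi‖ = 1 ∧ ‖yi‖ = 1 ∧ Multiset.map u Finset.univ.val = M6 xi yi)
    (Tw : ∃ x' y' : ℂ, ‖x'‖ = 1 ∧ ‖y'‖ = 1 ∧
      Multiset.map (fun k => u1 k * (starRingEnd ℂ) (u k)) Finset.univ.val = M6 x' y') :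
    ∃ (c : ℂ) (f : Fin 6 → ZMod 3), c ≠ 0 ∧ (∀ k ∈ A, u k = W (f k) * c) ∧
      SurjOn A f ∧ SurjOn A (fun k => ε k - f k) := by
  classical
  obtain ⟨xi, yi, hxi1, hyi1, hEqu⟩ := Tu
  obtain ⟨x', y', hx'1, hy'1, hEqw⟩ := Tw
  have hxi0 : xi ≠ 0 := norm_one_ne_zero hxi1
  have hyi0 : yi ≠ 0 := norm_one_ne_zero hyi1
  have hx'0 : x' ≠ 0 := norm_one_ne_zero hx'1
  have hy'0 : y' ≠ 0 := norm_one_ne_zero hy'1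
  set w : Fin 6 → ℂ := fun k => u1 k * (starRingEnd ℂ) (u k) with hw
  have hAne : A.Nonempty := by
    rw [← Finset.card_pos, hA]; norm_num
  -- general: once we have the coset data, the last surjectivity follows
  have final : ∀ (c : ℂ) (f : Fin 6 → ZMod 3), c ≠ 0 → (∀ k ∈ A, u k = W (f k) * c) →
      SurjOn A f → SurjOn A (fun k => ε k - f k) ∨ (∃ c', ∀ k ∈ A, ε k - f k = c') := by
    intro c f hc hf hfs
    exact diff_surj_or_const hA hεs hfs
  -- the value of w on A given coset data for u
  have w_on_A : ∀ (c : ℂ) (f : Fin 6 → ZMod 3), (∀ k ∈ A, u k = W (f k) * c) →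
      ∀ k ∈ A, w k = W (ε k - f k) * (x * (starRingEnd ℂ) c) := by
    intro c f hf k hk
    have h1 : u1 k = W (ε k) * x := hε k hk
    have h2 : u k = W (f k) * c := hf k hk
    rw [hw]
    show u1 k * (starRingEnd ℂ) (u k) = _
    rw [h1, h2, map_mul, conj_W]
    have : W (ε k) * x * (W (-f k) * (starRingEnd ℂ) c)
        = (W (ε k) * W (-f k)) * (x * (starRingEnd ℂ) c) := by ring
    rw [this, ← W_add, sub_eq_add_neg]
  -- derive last component once we have (c, f, hf, hfs)
  have finish : ∀ (c : ℂ) (f : Fin 6 → ZMod 3), c ≠ 0 → (∀ k ∈ A, u k = W (f k) * c) →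
      SurjOn A f → SurjOn A (fun k => ε k - f k) := by
    intro c f hc hf hfs
    rcases diff_surj_or_const hA hεs hfs with hgood | ⟨c', hc'⟩
    · exact hgood
    · exfalso
      refine card_le_contr hEqw hx'0 hy'0 hA (W c' * (x * (starRingEnd ℂ) c)) ?_
      intro k hk
      rw [w_on_A c f hf k hk, hc' k hk]
  by_cases hci : xi ^ 3 = yi ^ 3
  · -- Case I : u lies in a single coset
    have hratio : (yi * xi⁻¹) ^ 3 = 1 := by
      rw [mul_pow, inv_pow, ← hci, mul_inv_cancel₀ (pow_ne_zero _ hxi0)]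
    obtain ⟨d, hd⟩ := mem_range_W hratio
    have hyi_eq : yi = W d * xi := by
      field_simp at hd
      linear_combination hd
    have hglob : ∀ k, ∃ t, u k = W t * xi := by
      intro k
      rcases mem6 hEqu k with hc|hc|hc|hc|hc|hc
      · exact ⟨0, by rw [W_zero, one_mul]; exact hc⟩
      · exact ⟨1, by rw [W_one]; exact hc⟩
      · exact ⟨2, by rw [W_two]; exact hc⟩
      · exact ⟨d, by rw [← hyi_eq]; exact hc⟩
      · exact ⟨1 + d, by rw [W_add, W_one, mul_assoc, ← hyi_eq]; exact hc⟩
      · exact ⟨2 + d, by rw [W_add, W_two, mul_assoc, ← hyi_eq]; exact hc⟩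
    choose f hf using hglob
    have hucube : ∀ k, (u k) ^ 3 = xi ^ 3 := fun k => by rw [hf k, cube_W_mul]
    have hfA : ∀ k ∈ A, u k = W (f k) * xi := fun k _ => hf k
    -- SurjOn A (ε - f) via surj_from_split
    have hz0 : (x * (starRingEnd ℂ) xi) ≠ 0 := mul_ne_zero hx0 (conj_ne_zero hxi0)
    have hds : SurjOn A (fun k => ε k - f k) := by
      apply surj_from_split hEqw hAne hz0 (w_on_A xi f hfA)
      intro k hk
      have h1 : (u1 k) ^ 3 = y ^ 3 := hoffA k hk
      have hwk : (w k) ^ 3 = y ^ 3 * (starRingEnd ℂ) (xi ^ 3) := by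
        rw [hw]
        show (u1 k * (starRingEnd ℂ) (u k)) ^ 3 = _
        rw [cube_mul_conj, h1, hucube k]
      rw [hwk, cube_mul_conj]
      intro hcontra
      exact hXY (mul_right_cancel₀ (conj_ne_zero (pow_ne_zero _ hxi0)) hcontra).symm
    -- SurjOn A f via difference with ε
    have hfs : SurjOn A f := by
      rcases diff_surj_or_const hA hεs hds with hgood | ⟨c', hc'⟩
      · intro t
        obtain ⟨k, hkA, hk⟩ := hgood t
        refine ⟨k, hkA, ?_⟩
        have : ε k - (ε k - f k) = f k := by ring
        rw [← this]
        exact hk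
      · exfalso
        refine card_le_contr hEqu hxi0 hyi0 hA (W c' * xi) ?_
        intro k hk
        have hcc := hc' k hk
        have hfk : f k = c' := by rw [← hcc]; ring
        rw [hf k, hfk]
    exact ⟨xi, f, hxi0, hfA, hfs, hds⟩
  · -- Case II : u is split
    set Ai : Finset (Fin 6) := Finset.univ.filter (fun k => (u k) ^ 3 = xi ^ 3) with hAidef
    have hAi3 : Ai.card = 3 := card3 hEqu hci
    have hmemAi : ∀ k, k ∈ Ai ↔ (u k) ^ 3 = xi ^ 3 := by
      intro k; simp [hAidef]
    have hoffAi : ∀ k, k ∉ Ai → (u k) ^ 3 = yi ^ 3 := by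
      intro k hk
      rcases cube6 hEqu k with h | h
      · exact absurd ((hmemAi k).2 h) hk
      · exact h
    obtain ⟨e, he, hes⟩ := split_extract hEqu hxi0 hci
    obtain ⟨e', he', hes'⟩ := split_extract (hEqu.trans (M6_comm xi yi)) hyi0 (Ne.symm hci)
    -- Alignment : Ai = A or Ai = Aᶜ
    have halign : Ai = A ∨ (∀ k, k ∈ Ai ↔ k ∉ A) := by
      by_cases heqA : Ai = A
      · exact Or.inl heqA
      right
      -- first show A ∩ Ai = ∅
      have hdisj : A ∩ Ai = ∅ := by
        by_contra hne'
        obtain ⟨k1, hk1⟩ := Finset.nonempty_iff_ne_empty.2 hne'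
        have hk1A : k1 ∈ A := (Finset.mem_inter.1 hk1).1
        have hk1Ai : k1 ∈ Ai := (Finset.mem_inter.1 hk1).2
        -- k2 ∈ A \ Ai
        have hnsub1 : ¬ (A ⊆ Ai) := by
          intro hsub
          exact heqA (Finset.eq_of_subset_of_card_le hsub (by rw [hA, hAi3])).symm
        obtain ⟨k2, hk2A, hk2nAi⟩ := Finset.not_subset.1 hnsub1
        -- k3 ∈ Ai \ A
        have hnsub2 : ¬ (Ai ⊆ A) := by
          intro hsub
          exact heqA (Finset.eq_of_subset_of_card_le hsub (by rw [hA, hAi3]))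
        obtain ⟨k3, hk3Ai, hk3nA⟩ := Finset.not_subset.1 hnsub2
        -- k4 outside both
        have hcard_union : (A ∪ Ai).card + (A ∩ Ai).card = 6 := by
          rw [Finset.card_union_add_card_inter, hA, hAi3]
        have hinter_pos : 0 < (A ∩ Ai).card := Finset.card_pos.2 ⟨k1, hk1⟩
        have hk4ex : ((A ∪ Ai)ᶜ).Nonempty := by
          rw [← Finset.card_pos, Finset.card_compl]
          have : Fintype.card (Fin 6) = 6 := by simp
          omega
        obtain ⟨k4, hk4⟩ := hk4ex
        have hk4nA : k4 ∉ A := fun hna => (Finset.mem_compl.1 hk4) (Finset.mem_union_left _ hna)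
        have hk4nAi : k4 ∉ Ai := fun hna => (Finset.mem_compl.1 hk4) (Finset.mem_union_right _ hna)
        -- values
        set X := x ^ 3
        set Y := y ^ 3
        set Xi := xi ^ 3
        set Yi := yi ^ 3
        have hwc : ∀ k, (w k) ^ 3 = (u1 k) ^ 3 * (starRingEnd ℂ) ((u k) ^ 3) := by
          intro k
          rw [hw]
          exact cube_mul_conj (u1 k) (u k)
        have hV1 : (w k1) ^ 3 = X * (starRingEnd ℂ) Xi := by
          rw [hwc, (hmemA k1).1 hk1A, (hmemAi k1).1 hk1Ai]
        have hV2 : (w k2) ^ 3 = X * (starRingEnd ℂ) Yi := by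
          rw [hwc, (hmemA k2).1 hk2A, hoffAi k2 hk2nAi]
        have hV3 : (w k3) ^ 3 = Y * (starRingEnd ℂ) Xi := by
          rw [hwc, hoffA k3 hk3nA, (hmemAi k3).1 hk3Ai]
        have hV4 : (w k4) ^ 3 = Y * (starRingEnd ℂ) Yi := by
          rw [hwc, hoffA k4 hk4nA, hoffAi k4 hk4nAi]
        have hX0 : X ≠ 0 := pow_ne_zero _ hx0
        have hXine : (starRingEnd ℂ) Xi ≠ 0 := conj_ne_zero (pow_ne_zero _ hxi0)
        have hYine : (starRingEnd ℂ) Yi ≠ 0 := conj_ne_zero (pow_ne_zero _ hyi0)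
        have d12 : X * (starRingEnd ℂ) Xi ≠ X * (starRingEnd ℂ) Yi := by
          intro hcon
          have := mul_left_cancel₀ hX0 hcon
          have h2 : Xi = Yi := by
            have := congrArg (starRingEnd ℂ) this
            simpa using this
          exact hci h2
        have d13 : X * (starRingEnd ℂ) Xi ≠ Y * (starRingEnd ℂ) Xi := by
          intro hcon
          exact hXY (mul_right_cancel₀ hXine hcon)
        have d24 : X * (starRingEnd ℂ) Yi ≠ Y * (starRingEnd ℂ) Yi := by
          intro hcon
          exact hXY (mul_right_cancel₀ hYine hcon)
        -- x'^3 ≠ y'^3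
        have hsplitw : x' ^ 3 ≠ y' ^ 3 := by
          intro hcon
          have h1 := cube6 hEqw k1
          have h2 := cube6 hEqw k2
          rw [hcon] at h1 h2
          have e1 : (w k1) ^ 3 = y' ^ 3 := by tauto
          have e2 : (w k2) ^ 3 = y' ^ 3 := by tauto
          exact d12 ((hV1.symm.trans e1).trans (e2.symm.trans hV2))
        have hV1m : X * (starRingEnd ℂ) Xi = x' ^ 3 ∨ X * (starRingEnd ℂ) Xi = y' ^ 3 := by
          rcases cube6 hEqw k1 with h | h
          · exact Or.inl (hV1.symm.trans h)
          · exact Or.inr (hV1.symm.trans h)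
        have hV2m : X * (starRingEnd ℂ) Yi = x' ^ 3 ∨ X * (starRingEnd ℂ) Yi = y' ^ 3 := by
          rcases cube6 hEqw k2 with h | h
          · exact Or.inl (hV2.symm.trans h)
          · exact Or.inr (hV2.symm.trans h)
        have hV4m : Y * (starRingEnd ℂ) Yi = x' ^ 3 ∨ Y * (starRingEnd ℂ) Yi = y' ^ 3 := by
          rcases cube6 hEqw k4 with h | h
          · exact Or.inl (hV4.symm.trans h)
          · exact Or.inr (hV4.symm.trans h)
        -- main count argument : V1 ≠ V4
        have main : X * (starRingEnd ℂ) Xi ≠ Y * (starRingEnd ℂ) Yi := by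
          intro h14
          have hfiltereq : Finset.univ.filter (fun k => (w k) ^ 3 = X * (starRingEnd ℂ) Xi)
              = (A ∩ Ai) ∪ (A ∪ Ai)ᶜ := by
            ext k
            simp only [Finset.mem_filter, Finset.mem_univ, true_and, Finset.mem_union,
              Finset.mem_inter, Finset.mem_compl]
            constructor
            · intro hk
              by_cases hkA : k ∈ A <;> by_cases hkAi : k ∈ Ai
              · exact Or.inl ⟨hkA, hkAi⟩
              · exfalso
                apply d12
                rw [← hk, hwc, (hmemA k).1 hkA, hoffAi k hkAi]
              · exfalso
                apply d13
                rw [← hk, hwc, hoffA k hkA, (hmemAi k).1 hkAi]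
              · exact Or.inr (fun hor => hor.elim hkA hkAi)
            · intro hk
              rcases hk with ⟨hkA, hkAi⟩ | hnk
              · rw [hwc, (hmemA k).1 hkA, (hmemAi k).1 hkAi]
              · have hkA : k ∉ A := fun hc' => hnk (Or.inl hc')
                have hkAi : k ∉ Ai := fun hc' => hnk (Or.inr hc')
                rw [hwc, hoffA k hkA, hoffAi k hkAi, ← h14]
          have hcard3 : (Finset.univ.filter (fun k => (w k) ^ 3 = X * (starRingEnd ℂ) Xi)).card = 3 := by
            rcases hV1m with hv | hv
            · rw [hv]
              exact card3 hEqw hsplitw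
            · rw [hv]
              exact card3 (hEqw.trans (M6_comm x' y')) (Ne.symm hsplitw)
          have hdisj2 : Disjoint (A ∩ Ai) ((A ∪ Ai)ᶜ) := by
            rw [Finset.disjoint_left]
            intro k hk hk2
            exact (Finset.mem_compl.1 hk2) (Finset.mem_union_left _ (Finset.mem_inter.1 hk).1)
          have hcu : ((A ∩ Ai) ∪ (A ∪ Ai)ᶜ).card = (A ∩ Ai).card + ((A ∪ Ai)ᶜ).card :=
            Finset.card_union_of_disjoint hdisj2
          have hcompl : ((A ∪ Ai)ᶜ).card + (A ∪ Ai).card = 6 := by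
            have h6 : ((A ∪ Ai)ᶜ).card = Fintype.card (Fin 6) - (A ∪ Ai).card :=
              Finset.card_compl _
            have h7 : (A ∪ Ai).card ≤ Fintype.card (Fin 6) := Finset.card_le_univ _
            simp only [Fintype.card_fin] at h6 h7
            omega
          rw [hfiltereq, hcu] at hcard3
          omega
        -- finish the contradiction
        rcases hV1m with h1 | h1 <;> rcases hV4m with h4 | h4 <;> rcases hV2m with h2 | h2
        · exact main (h1.trans h4.symm)
        · exact main (h1.trans h4.symm)
        · exact d12 (h1.trans h2.symm)
        · exact d24 (h2.trans h4.symm)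
        · exact d24 (h2.trans h4.symm)
        · exact d12 (h1.trans h2.symm)
        · exact main (h1.trans h4.symm)
        · exact main (h1.trans h4.symm)
      -- now A ∩ Ai = ∅ implies Ai = Aᶜ
      have hsub : Ai ⊆ Aᶜ := by
        intro k hk
        rw [Finset.mem_compl]
        intro hkA
        have : k ∈ A ∩ Ai := Finset.mem_inter.2 ⟨hkA, hk⟩
        rw [hdisj] at this
        simp at this
      have hAc : (Aᶜ : Finset (Fin 6)).card = 3 := by
        rw [Finset.card_compl, hA]
        simp
      have := Finset.eq_of_subset_of_card_le hsub (by rw [hAc, hAi3])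
      intro k
      rw [this, Finset.mem_compl]
    -- use alignment
    rcases halign with heqA | hcomp
    · -- Ai = A : use e
      have hfA : ∀ k ∈ A, u k = W (e k) * xi := by
        intro k hk
        exact he k ((hmemAi k).1 (heqA ▸ hk))
      have hfs : SurjOn A e := by
        intro t
        obtain ⟨k, hk3, hkt⟩ := hes t
        exact ⟨k, heqA ▸ (hmemAi k).2 hk3, hkt⟩
      exact ⟨xi, e, hxi0, hfA, hfs, finish xi e hxi0 hfA hfs⟩
    · -- Ai = Aᶜ : use e' (the y-class of u is A)
      have hfA : ∀ k ∈ A, u k = W (e' k) * yi := by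
        intro k hk
        apply he' k
        apply hoffAi k
        intro hkAi
        exact ((hcomp k).1 hkAi) hk
      have hfs : SurjOn A e' := by
        intro t
        obtain ⟨k, hk3, hkt⟩ := hes' t
        refine ⟨k, ?_, hkt⟩
        by_contra hkA
        have hkAi : k ∈ Ai := by
          rw [hcomp k]
          exact hkA
        have := (hmemAi k).1 hkAi
        rw [this] at hk3
        exact hci hk3
      exact ⟨yi, e', hyi0, hfA, hfs, finish yi e' hyi0 hfA hfs⟩

lemma core (u1 u2 u3 : Fin 6 → ℂ)
    (T1 : ∃ x y : ℂ, ‖x‖ = 1 ∧ ‖y‖ = 1 ∧ Multiset.map u1 Finset.univ.val = M6 x y)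
    (T2 : ∃ x y : ℂ, ‖x‖ = 1 ∧ ‖y‖ = 1 ∧ Multiset.map u2 Finset.univ.val = M6 x y)
    (T3 : ∃ x y : ℂ, ‖x‖ = 1 ∧ ‖y‖ = 1 ∧ Multiset.map u3 Finset.univ.val = M6 x y)
    (T12 : ∃ x y : ℂ, ‖x‖ = 1 ∧ ‖y‖ = 1 ∧
      Multiset.map (fun k => u1 k * (starRingEnd ℂ) (u2 k)) Finset.univ.val = M6 x y)
    (T13 : ∃ x y : ℂ, ‖x‖ = 1 ∧ ‖y‖ = 1 ∧
      Multiset.map (fun k => u1 k * (starRingEnd ℂ) (u3 k)) Finset.univ.val = M6 x y)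
    (T23 : ∃ x y : ℂ, ‖x‖ = 1 ∧ ‖y‖ = 1 ∧
      Multiset.map (fun k => u2 k * (starRingEnd ℂ) (u3 k)) Finset.univ.val = M6 x y)
    (hsplit : ∃ k k', (u1 k) ^ 3 ≠ (u1 k') ^ 3) : False := by
  classical
  obtain ⟨x, y, hx1, hy1, hEq1⟩ := T1
  have hx0 : x ≠ 0 := norm_one_ne_zero hx1
  have hy0 : y ≠ 0 := norm_one_ne_zero hy1
  have hXY : x ^ 3 ≠ y ^ 3 := by
    intro hcon
    obtain ⟨k, k', hkk⟩ := hsplit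
    apply hkk
    have hall : ∀ j, (u1 j) ^ 3 = x ^ 3 := by
      intro j
      rcases cube6 hEq1 j with hh | hh
      · exact hh
      · rw [hh]; exact hcon.symm
    rw [hall k, hall k']
  set A : Finset (Fin 6) := Finset.univ.filter (fun k => (u1 k) ^ 3 = x ^ 3) with hAdef
  have hA : A.card = 3 := card3 hEq1 hXY
  have hmemA : ∀ k, k ∈ A ↔ (u1 k) ^ 3 = x ^ 3 := by intro k; simp [hAdef]
  have hoffA : ∀ k, k ∉ A → (u1 k) ^ 3 = y ^ 3 := by
    intro k hk
    rcases cube6 hEq1 k with hh | hh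
    · exact absurd ((hmemA k).2 hh) hk
    · exact hh
  obtain ⟨ε, hε0, hεs0⟩ := split_extract hEq1 hx0 hXY
  have hε : ∀ k ∈ A, u1 k = W (ε k) * x := fun k hk => hε0 k ((hmemA k).1 hk)
  have hεs : SurjOn A ε := by
    intro t
    obtain ⟨k, h3, ht⟩ := hεs0 t
    exact ⟨k, (hmemA k).2 h3, ht⟩
  obtain ⟨c2, f2, hc2, hf2, hf2s, hd2s⟩ :=
    row_lemma u1 u2 x y hx0 hXY A hA hmemA hoffA ε hε hεs T2 T12
  obtain ⟨c3, f3, hc3, hf3, hf3s, hd3s⟩ :=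
    row_lemma u1 u3 x y hx0 hXY A hA hmemA hoffA ε hε hεs T3 T13
  obtain ⟨x'', y'', hx''1, hy''1, hEqv⟩ := T23
  have hv : ∀ k ∈ A, u2 k * (starRingEnd ℂ) (u3 k)
      = W (f2 k - f3 k) * (c2 * (starRingEnd ℂ) c3) := by
    intro k hk
    rw [hf2 k hk, hf3 k hk, map_mul, conj_W]
    have : W (f2 k) * c2 * (W (-f3 k) * (starRingEnd ℂ) c3)
        = (W (f2 k) * W (-f3 k)) * (c2 * (starRingEnd ℂ) c3) := by ring
    rw [this, ← W_add, sub_eq_add_neg]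
  have h23s : SurjOn A (fun k => f2 k - f3 k) := by
    rcases diff_surj_or_const hA hf2s hf3s with hgood | ⟨c', hc'⟩
    · exact hgood
    · exfalso
      refine card_le_contr hEqv (norm_one_ne_zero hx''1) (norm_one_ne_zero hy''1) hA
        (W c' * (c2 * (starRingEnd ℂ) c3)) ?_
      intro k hk
      rw [hv k hk, hc' k hk]
  exact pigeon hA hεs hf2s hf3s hd2s hd3s h23s

lemma cuberoot {z : ℂ} (hz : ‖z‖ = 1) : ∃ c : ℂ, ‖c‖ = 1 ∧ c ^ 3 = z := by
  refine ⟨Complex.exp (↑(z.arg / 3) * Complex.I), ?_, ?_⟩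
  · exact Complex.norm_exp_ofReal_mul_I (z.arg / 3)
  · rw [← Complex.exp_nat_mul]
    have h3 : ((3:ℕ) : ℂ) * (↑(z.arg / 3) * Complex.I) = ↑z.arg * Complex.I := by
      push_cast; ring
    rw [h3]
    have habs := Complex.norm_mul_exp_arg_mul_I z
    have h1 : (‖z‖ : ℝ) = 1 := hz
    rw [h1, Complex.ofReal_one, one_mul] at habs
    exact habs

/-- A 4×6 matrix with unimodular entries all of whose pairs of distinct
rows are ternary is equivalent to a matrix with all 24 entries in `{1, j, j²}`. -/
theorem stmt_13 (h : Matrix (Fin 4) (Fin 6) ℂ)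
    (hmod : ∀ i j, ‖h i j‖ = 1)
    (hter : ∀ i₁ i₂ : Fin 4, i₁ ≠ i₂ → TernaryPair h i₁ i₂) :
    ∃ k : Matrix (Fin 4) (Fin 6) ℂ, MatEquiv h k ∧
      ∀ i j, k i j ∈ ({1, ω, ω ^ 2} : Set ℂ) := by
  classical
  set u : Fin 4 → Fin 6 → ℂ := fun i k => h i k * (starRingEnd ℂ) (h 0 k) with hu
  have hcc : ∀ (j : Fin 6), h 0 j * (starRingEnd ℂ) (h 0 j) = 1 := by
    intro j
    rw [Complex.mul_conj, Complex.normSq_eq_norm_sq, hmod]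
    push_cast
    norm_num
  have hnu : ∀ i k, ‖u i k‖ = 1 := by
    intro i k
    rw [hu]
    simp only [norm_mul, RCLike.norm_conj, hmod]
    norm_num
  have hpair : ∀ i j : Fin 4, (fun k => u i k * (starRingEnd ℂ) (u j k))
      = (fun k => h i k * (starRingEnd ℂ) (h j k)) := by
    intro i j
    funext k
    show h i k * (starRingEnd ℂ) (h 0 k) * (starRingEnd ℂ) (h j k * (starRingEnd ℂ) (h 0 k)) = _
    rw [map_mul, Complex.conj_conj]
    calc h i k * (starRingEnd ℂ) (h 0 k) * ((starRingEnd ℂ) (h j k) * h 0 k)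
        = (h i k * (starRingEnd ℂ) (h j k)) * (h 0 k * (starRingEnd ℂ) (h 0 k)) := by ring
      _ = h i k * (starRingEnd ℂ) (h j k) := by rw [hcc k, mul_one]
  have T6i : ∀ i : Fin 4, i ≠ 0 →
      ∃ x y : ℂ, ‖x‖ = 1 ∧ ‖y‖ = 1 ∧ Multiset.map (u i) Finset.univ.val = M6 x y := by
    intro i hi
    obtain ⟨x, y, hx, hy, hEq⟩ := hter i 0 hi
    exact ⟨x, y, hx, hy, hEq⟩
  have T6pair : ∀ i j : Fin 4, i ≠ j →
      ∃ x y : ℂ, ‖x‖ = 1 ∧ ‖y‖ = 1 ∧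
        Multiset.map (fun k => u i k * (starRingEnd ℂ) (u j k)) Finset.univ.val = M6 x y := by
    intro i j hij
    obtain ⟨x, y, hx, hy, hEq⟩ := hter i j hij
    refine ⟨x, y, hx, hy, ?_⟩
    rw [hpair i j]
    exact hEq
  have key : ∀ i : Fin 4, ∀ k k' : Fin 6, (u i k) ^ 3 = (u i k') ^ 3 := by
    intro i
    by_cases hi : i = 0
    · subst hi
      intro k k'
      show (h 0 k * (starRingEnd ℂ) (h 0 k)) ^ 3 = (h 0 k' * (starRingEnd ℂ) (h 0 k')) ^ 3
      rw [hcc k, hcc k']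
    · by_contra hne
      push_neg at hne
      obtain ⟨k, k', hkk⟩ := hne
      have hcore : ∀ j l : Fin 4, j ≠ 0 → l ≠ 0 → i ≠ j → i ≠ l → j ≠ l → False := by
        intro j l hj0 hl0 hji hli hjl
        exact core (u i) (u j) (u l) (T6i i hi) (T6i j hj0) (T6i l hl0)
          (T6pair i j hji) (T6pair i l hli) (T6pair j l hjl)
          ⟨k, k', hkk⟩
      fin_cases i
      · exact hi rfl
      · exact hcore 2 3 (by decide) (by decide) (by decide) (by decide) (by decide)
      · exact hcore 1 3 (by decide) (by decide) (by decide) (by decide) (by decide)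
      · exact hcore 1 2 (by decide) (by decide) (by decide) (by decide) (by decide)
  have hCnorm : ∀ i : Fin 4, ‖(u i 0) ^ 3‖ = 1 := by
    intro i
    rw [norm_pow, hnu]
    norm_num
  have hex : ∀ i : Fin 4, ∃ c : ℂ, ‖c‖ = 1 ∧ c ^ 3 = (u i 0) ^ 3 :=
    fun i => cuberoot (hCnorm i)
  choose c hc1 hc3 using hex
  refine ⟨fun i j => (starRingEnd ℂ) (c i) * (starRingEnd ℂ) (h 0 j) * h i j,
    ⟨Equiv.refl _, Equiv.refl _, fun i => (starRingEnd ℂ) (c i),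
      fun j => (starRingEnd ℂ) (h 0 j), ?_, ?_, ?_⟩, ?_⟩
  · intro i
    rw [RCLike.norm_conj]
    exact hc1 i
  · intro j
    rw [RCLike.norm_conj]
    exact hmod 0 j
  · intro i j
    rfl
  · intro i j
    have hcube : ((starRingEnd ℂ) (c i) * (starRingEnd ℂ) (h 0 j) * h i j) ^ 3 = 1 := by
      have e1 : ((starRingEnd ℂ) (c i) * (starRingEnd ℂ) (h 0 j) * h i j) ^ 3
          = ((starRingEnd ℂ) (c i)) ^ 3 * (h i j * (starRingEnd ℂ) (h 0 j)) ^ 3 := by ring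
      rw [e1, ← map_pow, hc3 i]
      have e2 : (u i 0) ^ 3 = (u i j) ^ 3 := key i 0 j
      rw [e2]
      have e3 : (h i j * (starRingEnd ℂ) (h 0 j)) ^ 3 = (u i j) ^ 3 := rfl
      rw [e3]
      rw [show (starRingEnd ℂ) ((u i j) ^ 3) * (u i j) ^ 3
          = (u i j) ^ 3 * (starRingEnd ℂ) ((u i j) ^ 3) from mul_comm _ _]
      rw [Complex.mul_conj, Complex.normSq_eq_norm_sq, norm_pow, hnu]
      push_cast
      norm_num
    rcases cube_roots hcube with hh | hh | hh <;>
      simp only [Set.mem_insert_iff, Set.mem_singleton_iff] <;> tauto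
end
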